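/- arXiv:2406.06036 — 7 statements merged into one kernel-verified Lean document; each statement's English description precedes it below -/
import Mathlib

section
/- Let G be a finite group all of whose irreducible complex characters have degree at most 2. Then the character table sum of G is at most twice the character degree sum of G. -/
open CategoryTheory
open scoped ComplexOrder

/-- `S` is the (finite) set of irreducible complex characters of `G`. -/
def IsIrrFamily (G : Type) [Group G] (S : Finset (G → ℂ)) : Prop :=
  (∀ f ∈ S, ∃ V : FDRep ℂ G, Simple V ∧ V.character = f) ∧
  ∀ V : FDRep ℂ G, Simple V → V.character ∈ S

/-- The character table sum: sum of all character values over irreducible characters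
and conjugacy classes. -/
noncomputable def tableSum (G : Type) [Group G] (S : Finset (G → ℂ)) : ℂ :=
  ∑ f ∈ S, ∑ᶠ C : ConjClasses G, f (Quotient.out C)

/-- The character degree sum: sum of the values at the identity. -/
noncomputable def degreeSum (G : Type) [Group G] (S : Finset (G → ℂ)) : ℂ :=
  ∑ f ∈ S, f 1

/-!
Write `⟨a, b⟩ = |G|⁻¹ ∑_g a(g) b(g⁻¹)` (`charPairing`). For an irreducible character `χ`, the row
sum `∑_C χ(g_C)` equals `⟨χ, ψ⟩`, where `ψ` is the character of the conjugation action of `G` on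
`ℂ^G`: indeed `ψ(g) = |C_G(g)|`, and `∑_g |C_G(g)| f(g) = |G| ∑_C f(g_C)` for every class
function `f`. Moreover `⟨χ, ψ⟩` is the dimension of a space of intertwiners, hence a natural
number. By Maschke's theorem every character is a sum of irreducible ones, so evaluating the
decompositions of `ψ` and of the regular character at `1` gives
`∑_χ ⟨χ, ψ⟩ χ(1) = |G| = ∑_χ χ(1)²`. Since `1 ≤ χ(1) ≤ 2`,
`∑_χ ⟨χ, ψ⟩ ≤ ∑_χ ⟨χ, ψ⟩ χ(1) = ∑_χ χ(1)² ≤ 2 ∑_χ χ(1)`.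
-/

open Limits Module Finset

universe u

theorem LinearMap.trace_funLeft {R X : Type*} [CommRing R] [Fintype X] [DecidableEq X]
    (f : X → X) : trace R (X → R) (funLeft R R f) = #{x | f x = x} := by
  rw [trace_eq_matrix_trace R (Pi.basisFun R X), Matrix.trace]
  simp [Pi.single_apply, eq_comm]

theorem Subgroup.nat_card_centralizer_mul_ncard_carrier {G : Type*} [Group G] (g : G) :
    Nat.card (centralizer {g}) * (ConjClasses.mk g).carrier.ncard = Nat.card G := by
  rw [nat_card_centralizer_nat_card_stabilizer, ← ConjAct.orbit_eq_carrier_conjClasses,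
    ← MulAction.index_stabilizer, card_mul_index]
  rfl

theorem sum_nat_card_centralizer_mul_eq_nat_card_mul_finsum {k G : Type*} [Field k] [CharZero k]
    [Group G] [Fintype G] (f : G → k) (hf : ∀ g h, f (h * g * h⁻¹) = f g) :
    ∑ g, (Nat.card (Subgroup.centralizer {g}) : k) * f g =
      Nat.card G * ∑ᶠ C : ConjClasses G, f C.out := by
  classical
  rw [finsum_eq_sum_of_fintype, mul_sum, ← sum_fiberwise univ ConjClasses.mk]
  refine sum_congr rfl fun C _ => ?_
  set F : Finset G := {g | ConjClasses.mk g = C}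
  have hF (g : G) (hg : g ∈ F) :
      (Nat.card (Subgroup.centralizer {g}) : k) * f g * #F = Nat.card G * f C.out := by
    rw [mem_filter] at hg
    obtain ⟨c, hc⟩ := isConj_iff.1 (ConjClasses.mk_eq_mk_iff_isConj.1 (hg.2.trans C.out_eq.symm))
    have hcarrier : (ConjClasses.mk g).carrier = F := by
      ext x
      simp [F, ConjClasses.mem_carrier_iff_mk_eq, hg.2]
    rw [← hc, hf, mul_right_comm, ← Set.ncard_coe_finset, ← hcarrier, ← Nat.cast_mul,
      Subgroup.nat_card_centralizer_mul_ncard_carrier]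
  have hF0 : (#F : k) ≠ 0 :=
    Nat.cast_ne_zero.2 (card_ne_zero_of_mem (mem_filter.2 ⟨mem_univ _, C.out_eq⟩))
  apply mul_right_cancel₀ hF0
  rw [sum_mul, sum_congr rfl hF, sum_const, nsmul_eq_mul]
  ring

theorem CategoryTheory.exists_mono_ne_zero_not_isIso_of_not_simple {C : Type*} [Category C]
    [HasZeroMorphisms C] {X : C} (hs : ¬Simple X) (hz : ¬IsZero X) :
    ∃ (Y : C) (f : Y ⟶ X), Mono f ∧ f ≠ 0 ∧ ¬IsIso f := by
  by_contra! h
  refine hs ⟨fun {Y} f _ => ⟨fun _ hf0 => hz ?_, h Y f inferInstance⟩⟩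
  subst hf0
  exact IsZero.of_epi_zero Y X

namespace FDRep

section Monoid

variable {k : Type u} {G : Type*} [Field k] [Monoid G]

theorem hom_comp_ρ {V W : FDRep k G} (f : V ⟶ W) (g : G) :
    f.hom.hom.hom ∘ₗ V.ρ g = W.ρ g ∘ₗ f.hom.hom.hom := by
  simpa using congrArg (fun φ => φ.hom.hom) (f.comm g)

theorem trace_ρ_comp_of_comp_eq_id {A B : FDRep k G} (i : A ⟶ B) (q : B ⟶ A) (h : i ≫ q = 𝟙 A)
    (g : G) : LinearMap.trace k B (B.ρ g ∘ₗ i.hom.hom.hom ∘ₗ q.hom.hom.hom) = A.character g := by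
  have hqi : q.hom.hom.hom ∘ₗ i.hom.hom.hom = LinearMap.id := congrArg (·.hom.hom.hom) h
  rw [← LinearMap.comp_assoc, ← hom_comp_ρ, LinearMap.comp_assoc, LinearMap.trace_comp_comm',
    LinearMap.comp_assoc, hqi, LinearMap.comp_id]
  rfl

theorem character_eq_add_of_splitting {S : ShortComplex (FDRep k G)} (σ : S.Splitting) :
    S.X₂.character = S.X₁.character + S.X₃.character := by
  ext g
  have hid : S.f.hom.hom.hom ∘ₗ σ.r.hom.hom.hom + σ.s.hom.hom.hom ∘ₗ S.g.hom.hom.hom =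
      LinearMap.id := congrArg (·.hom.hom.hom) σ.id
  rw [Pi.add_apply, ← trace_ρ_comp_of_comp_eq_id _ _ σ.f_r,
    ← trace_ρ_comp_of_comp_eq_id _ _ σ.s_g, ← map_add, ← LinearMap.comp_add, hid,
    LinearMap.comp_id]
  rfl

theorem isZero_iff_finrank_eq_zero (V : FDRep k G) : IsZero V ↔ finrank k V = 0 := by
  rw [IsZero.iff_id_eq_zero, Module.finrank_zero_iff]
  constructor
  · intro h
    have h0 (x : V) : x = 0 := congrArg (fun φ : V ⟶ V => φ.hom.hom.hom x) h
    exact ⟨fun x y => (h0 x).trans (h0 y).symm⟩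
  · intro
    ext x
    exact Subsingleton.elim _ _

theorem finrank_pos_of_simple (V : FDRep k G) [Simple V] : 0 < finrank k V :=
  Nat.pos_of_ne_zero fun h => Simple.not_isZero V ((isZero_iff_finrank_eq_zero V).2 h)

theorem character_eq_zero_of_isZero {V : FDRep k G} (h : IsZero V) : V.character = 0 := by
  have : Subsingleton V := Module.finrank_zero_iff.1 ((isZero_iff_finrank_eq_zero V).1 h)
  ext g
  simp [character, Subsingleton.elim (V.ρ g) 0]

end Monoid

section Group

variable {k : Type u} {G : Type*} [Field k] [Group G]

noncomputable def permRep {X : Type u} [Finite X] (σ : G →* Equiv.Perm X) : FDRep k G :=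
  FDRep.of
    { toFun g := LinearMap.funLeft k k (σ g⁻¹)
      map_one' := by ext; simp
      map_mul' g h := by ext; simp }

theorem character_permRep {X : Type u} [Fintype X] [DecidableEq X] (σ : G →* Equiv.Perm X)
    (g : G) : (permRep (k := k) σ).character g = #{x | σ g⁻¹ x = x} :=
  LinearMap.trace_funLeft _

theorem character_permRep_one {X : Type u} [Fintype X] (σ : G →* Equiv.Perm X) :
    (permRep (k := k) σ).character 1 = Fintype.card X := by
  simp [char_one, permRep]

end Group

variable {k G : Type u} [Field k] [Group G]

variable (k G) in
noncomputable abbrev regRep [Finite G] : FDRep k G := permRep (MulAction.toPermHom G G)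

variable (k G) in
noncomputable abbrev conjRep [Finite G] : FDRep k G :=
  permRep ((MulAut.toPerm G).comp MulAut.conj)

/-- Maschke's theorem enters here: every object of `FDRep k G` is injective. -/
noncomputable def splittingOfMono [Finite G] [NeZero (Nat.card G : k)] {A W : FDRep k G}
    (f : A ⟶ W) [Mono f] : (ShortComplex.mk f (cokernel.π f) (cokernel.condition f)).Splitting :=
  .ofExactOfRetraction _ (ShortComplex.exact_of_g_is_cokernel _ (cokernelIsCokernel f))
    (Injective.factorThru (𝟙 A) f) (Injective.comp_factorThru _ _)
    (inferInstanceAs (Epi (cokernel.π f)))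

theorem character_mem_closure [Finite G] [CharZero k] {S : Set (G → k)}
    (hS : ∀ V : FDRep k G, Simple V → V.character ∈ S) (W : FDRep k G) :
    W.character ∈ AddSubmonoid.closure S := by
  induction h : finrank k W using Nat.strong_induction_on generalizing W with
  | _ n ih =>
  by_cases hz : IsZero W
  · rw [character_eq_zero_of_isZero hz]
    exact zero_mem _
  by_cases hs : Simple W
  · exact AddSubmonoid.subset_closure (hS W hs)
  obtain ⟨A, f, _, hf0, hfi⟩ := exists_mono_ne_zero_not_isIso_of_not_simple hs hz
  have hchar : W.character = A.character + (cokernel f).character :=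
    character_eq_add_of_splitting (splittingOfMono f)
  have hrank : finrank k W = finrank k A + finrank k (cokernel f : FDRep k G) :=
    Nat.cast_injective (R := k) (by simpa [char_one] using congrFun hchar 1)
  have hA : finrank k A ≠ 0 := fun h0 =>
    hf0 (((isZero_iff_finrank_eq_zero A).2 h0).eq_of_src _ _)
  have hC : finrank k (cokernel f : FDRep k G) ≠ 0 := fun h0 => hfi <| by
    have : Epi f := Abelian.epi_of_cokernel_π_eq_zero f
      (((isZero_iff_finrank_eq_zero _).2 h0).eq_of_tgt _ _)
    exact isIso_of_mono_of_epi f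
  rw [hchar]
  exact add_mem (ih _ (by omega) A rfl) (ih _ (by omega) (cokernel f) rfl)

end FDRep

section CharPairing

variable {k G : Type u} [Field k] [Group G] [Fintype G]

noncomputable def charPairing (a b : G → k) : k := (Nat.card G : k)⁻¹ * ∑ g, a g * b g⁻¹

theorem charPairing_add_right (a b c : G → k) :
    charPairing a (b + c) = charPairing a b + charPairing a c := by
  simp [charPairing, mul_add, sum_add_distrib]

open Classical in
theorem eq_sum_charPairing_smul_of_mem_closure {S : Finset (G → k)}
    (hS : ∀ χ ∈ S, ∀ χ' ∈ S, charPairing χ χ' = if χ = χ' then 1 else 0) {ψ : G → k}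
    (hψ : ψ ∈ AddSubmonoid.closure (S : Set (G → k))) : ψ = ∑ χ ∈ S, charPairing χ ψ • χ := by
  induction hψ using AddSubmonoid.closure_induction with
  | mem χ' hχ' =>
    rw [mem_coe] at hχ'
    rw [sum_congr rfl fun χ hχ => by rw [hS χ hχ χ' hχ']]
    simp [ite_smul, hχ']
  | zero => simp [charPairing]
  | add a b _ _ ha hb =>
    conv_lhs => rw [ha, hb]
    simp only [charPairing_add_right, add_smul, sum_add_distrib]

namespace FDRep

theorem charPairing_character [Invertible (Nat.card G : k)] (V W : FDRep k G) :
    charPairing V.character W.character = finrank k (W ⟶ V) :=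
  scalar_product_char_eq_finrank_equivariant W V

open Classical in
theorem charPairing_character_of_simple [IsAlgClosed k] [Invertible (Nat.card G : k)]
    (V W : FDRep k G) [Simple V] [Simple W] :
    charPairing V.character W.character = if V.character = W.character then 1 else 0 := by
  split_ifs with h
  · rw [← h]
    simpa [charPairing, Nonempty.intro (Iso.refl V)] using char_orthonormal V V
  · rw [charPairing, char_orthonormal, if_neg]
    exact fun ⟨i⟩ => h (char_iso i)

theorem character_eq_sum_charPairing_smul [IsAlgClosed k] [CharZero k] {S : Finset (G → k)}
    (hS₁ : ∀ χ ∈ S, ∃ V : FDRep k G, Simple V ∧ V.character = χ)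
    (hS₂ : ∀ V : FDRep k G, Simple V → V.character ∈ S) (W : FDRep k G) :
    W.character = ∑ χ ∈ S, charPairing χ W.character • χ := by
  refine eq_sum_charPairing_smul_of_mem_closure ?_ (character_mem_closure hS₂ W)
  intro χ hχ χ' hχ'
  obtain ⟨V, _, rfl⟩ := hS₁ χ hχ
  obtain ⟨V', _, rfl⟩ := hS₁ χ' hχ'
  exact charPairing_character_of_simple V V'

theorem charPairing_regRep [NeZero (Nat.card G : k)] (χ : G → k) :
    charPairing χ (regRep k G).character = χ 1 := by
  classical
  rw [charPairing, sum_eq_single 1]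
  · rw [inv_one, character_permRep_one, ← Nat.card_eq_fintype_card, mul_comm,
      mul_inv_cancel_right₀ (NeZero.ne _)]
  · intro g _ hg
    rw [character_permRep, inv_inv]
    simp [hg]
  · simp

theorem charPairing_conjRep [CharZero k] (χ : G → k) (hχ : ∀ g h, χ (h * g * h⁻¹) = χ g) :
    charPairing χ (conjRep k G).character = ∑ᶠ C : ConjClasses G, χ C.out := by
  classical
  have hψ (g : G) : (conjRep k G).character g⁻¹ = Nat.card (Subgroup.centralizer {g}) := by
    rw [character_permRep, inv_inv, Nat.card_eq_fintype_card, Fintype.card_subtype]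
    congr 2
    refine filter_congr fun x _ => ?_
    change g * x * g⁻¹ = x ↔ _
    rw [Subgroup.mem_centralizer_singleton_iff, mul_inv_eq_iff_eq_mul, eq_comm]
  simp_rw [charPairing, hψ, mul_comm (χ _),
    sum_nat_card_centralizer_mul_eq_nat_card_mul_finsum χ hχ]
  field_simp

end FDRep

end CharPairing

/-- If all irreducible complex characters of the finite group `G` have degree at
most `2`, then the character table sum is at most twice the character degree sum. -/
theorem tableSum_le_two_mul_degreeSum_of_degree_le_two (G : Type) [Group G] [Fintype G]
    (hdeg : ∀ V : FDRep ℂ G, Simple V → Module.finrank ℂ V ≤ 2)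
    (S : Finset (G → ℂ)) (hS : IsIrrFamily G S) :
    tableSum G S ≤ 2 * degreeSum G S := by
  obtain ⟨hS₁, hS₂⟩ := hS
  set ψ := (FDRep.conjRep ℂ G).character
  have hnat (χ) (hχ : χ ∈ S) : ∃ m d : ℕ, charPairing χ ψ = m ∧ χ 1 = d ∧ 1 ≤ d ∧ d ≤ 2 := by
    obtain ⟨V, hV, rfl⟩ := hS₁ χ hχ
    exact ⟨_, _, FDRep.charPairing_character _ _, FDRep.char_one V,
      FDRep.finrank_pos_of_simple V, hdeg V hV⟩
  have hψ := congrFun (FDRep.character_eq_sum_charPairing_smul hS₁ hS₂ (FDRep.conjRep ℂ G)) 1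
  have hρ := congrFun (FDRep.character_eq_sum_charPairing_smul hS₁ hS₂ (FDRep.regRep ℂ G)) 1
  simp only [Finset.sum_apply, Pi.smul_apply, smul_eq_mul, FDRep.charPairing_regRep,
    FDRep.character_permRep_one] at hψ hρ
  calc tableSum G S = ∑ χ ∈ S, charPairing χ ψ := sum_congr rfl fun χ hχ => by
        obtain ⟨V, _, rfl⟩ := hS₁ χ hχ
        exact (FDRep.charPairing_conjRep _ (FDRep.char_conj V)).symm
    _ ≤ ∑ χ ∈ S, charPairing χ ψ * χ 1 := sum_le_sum fun χ hχ => by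
        obtain ⟨m, d, hm, hd, h1, -⟩ := hnat χ hχ
        rw [hm, hd]
        exact_mod_cast Nat.le_mul_of_pos_right m h1
    _ = ∑ χ ∈ S, χ 1 * χ 1 := by rw [← hψ, hρ]
    _ ≤ ∑ χ ∈ S, 2 * χ 1 := sum_le_sum fun χ hχ => by
        obtain ⟨-, d, -, hd, -, h2⟩ := hnat χ hχ
        rw [hd]
        exact_mod_cast Nat.mul_le_mul_right d h2
    _ = 2 * degreeSum G S := (mul_sum _ _ _).symm
end

section
/- Let G be a totally orthogonal finite group (every irreducible representation is real). If the character table sum s(G) equals the character degree sum Γ_e(G), then every element of G squares to the identity and hence G is abelian. -/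
open CategoryTheory
open scoped ComplexOrder

private lemma simple_of_invariant {G : Type} [Group G] {M : Type} [AddCommGroup M] [Module ℂ M] [FiniteDimensional ℂ M]
    [Nontrivial M] (ρ : Representation ℂ G M)
    (hsimp : ∀ p : Submodule ℂ M, (∀ (g : G), ∀ m ∈ p, ρ g m ∈ p) → p = ⊥ ∨ p = ⊤) :
    Simple (FDRep.of ρ) := by
  constructor
  intro Y f hmono
  constructor
  · intro hiso h0
    obtain ⟨m, m', hmm⟩ := exists_pair_ne M
    have hepi : Epi f := inferInstance
    have h10 : (𝟙 (FDRep.of ρ) : _ ⟶ _) = 0 := by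
      refine (cancel_epi f).mp ?_
      rw [Category.comp_id, h0, Limits.comp_zero]
    have h1 : ∀ x : M, x = 0 := by
      intro x
      have h2 := congrArg Action.Hom.hom h10
      rw [Action.id_hom, Action.zero_hom] at h2
      calc x = (𝟙 (FDRep.of ρ).V : (FDRep.of ρ).V ⟶ _).hom.hom x := rfl
        _ = (0 : (FDRep.of ρ).V ⟶ _).hom.hom x := by rw [h2]
        _ = 0 := rfl
    exact hmm (by rw [h1 m, h1 m'])
  · intro hne
    have hcm : ∀ (g : G) (y : Y.V), f.hom.hom.hom (Y.ρ g y) = ρ g (f.hom.hom.hom y) := by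
      intro g y
      have hc := congrArg (fun φ => φ.hom.hom y) (f.comm g)
      exact hc
    have hker : LinearMap.ker f.hom.hom.hom = ⊥ := by
      by_contra hk
      set K := LinearMap.ker f.hom.hom.hom with hK
      have hinv : ∀ (g : G), ∀ y ∈ K, Y.ρ g y ∈ K := by
        intro g y hy
        have hy' : f.hom.hom.hom y = 0 := hy
        show f.hom.hom.hom (Y.ρ g y) = 0
        rw [hcm g y, hy', map_zero]
      let ρK : Representation ℂ G K :=
        { toFun := fun g => (Y.ρ g).restrict (hinv g)
          map_one' := by ext x; simp
          map_mul' := by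
            intro g h; apply LinearMap.ext; intro x; apply Subtype.ext
            show Y.ρ (g*h) x.val = Y.ρ g (Y.ρ h x.val)
            rw [map_mul]; rfl }
      let ι : FDRep.of ρK ⟶ Y :=
        { hom := FGModuleCat.ofHom K.subtype
          comm := fun g => rfl }
      have hcomp : ι ≫ f = 0 := by
        apply Action.hom_ext
        rw [Action.comp_hom, Action.zero_hom]
        ext x
        exact x.2
      have hι : ι = 0 := by
        have := hcomp.trans (Limits.zero_comp (f := f)).symm
        exact (cancel_mono f).mp this
      apply hk
      ext y
      simp only [Submodule.mem_bot]
      constructor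
      · intro hy
        have h3 := congrArg Action.Hom.hom hι
        rw [Action.zero_hom] at h3
        exact congrArg (fun φ => φ.hom.hom (⟨y, hy⟩ : K)) h3
      · intro h; rw [h]; exact K.zero_mem
    have hrange : LinearMap.range f.hom.hom.hom = ⊤ := by
      have hinvr : ∀ (g : G), ∀ m ∈ LinearMap.range f.hom.hom.hom, ρ g m ∈ LinearMap.range f.hom.hom.hom := by
        rintro g m ⟨y, rfl⟩
        exact ⟨Y.ρ g y, hcm g y⟩
      rcases hsimp (LinearMap.range f.hom.hom.hom) hinvr with h | h
      · exfalso
        apply hne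
        apply Action.hom_ext
        rw [Action.zero_hom]
        apply FGModuleCat.hom_ext
        apply LinearMap.ext; intro y
        have hmem : f.hom.hom.hom y ∈ LinearMap.range f.hom.hom.hom := ⟨y, rfl⟩
        rw [h] at hmem
        exact (Submodule.mem_bot ℂ).mp hmem
      · exact h
    -- build the inverse
    let e : (Y.V : Type) ≃ₗ[ℂ] M :=
      LinearEquiv.ofBijective f.hom.hom.hom ⟨LinearMap.ker_eq_bot.mp hker, LinearMap.range_eq_top.mp hrange⟩
    let ginv : FDRep.of ρ ⟶ Y :=
      { hom := FGModuleCat.ofHom (e.symm : M →ₗ[ℂ] Y.V)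
        comm := by
          intro g
          apply FGModuleCat.hom_ext
          apply LinearMap.ext; intro m
          apply e.injective
          change f.hom.hom.hom (e.symm (ρ g m)) = f.hom.hom.hom (Y.ρ g (e.symm m))
          rw [hcm g (e.symm m)]
          change e (e.symm (ρ g m)) = ρ g (e (e.symm m))
          rw [e.apply_symm_apply, e.apply_symm_apply] }
    refine ⟨⟨ginv, ?_, ?_⟩⟩
    · apply Action.hom_ext
      rw [Action.comp_hom, Action.id_hom]
      apply FGModuleCat.hom_ext
      apply LinearMap.ext; intro y
      exact e.symm_apply_apply y
    · apply Action.hom_ext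
      rw [Action.comp_hom, Action.id_hom]
      apply FGModuleCat.hom_ext
      apply LinearMap.ext; intro m
      exact e.apply_symm_apply m

set_option maxHeartbeats 1000000 in
private theorem classfun_eq_zero {G : Type} [Group G]  [Fintype G] (d : G → ℂ)
    (hclass : ∀ g h : G, d (h * g * h⁻¹) = d g)
    (horth : ∀ W : FDRep ℂ G, Simple W → ∑ g : G, d g * W.character g⁻¹ = 0)
    (g₀ : G) : d g₀ = 0 := by
  classical
  haveI : NeZero ((Fintype.card G : ℂ)) := ⟨Nat.cast_ne_zero.mpr Fintype.card_ne_zero⟩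
  set A := MonoidAlgebra ℂ G with hA
  haveI hfdA : FiniteDimensional ℂ A := inferInstance
  set z : A := ∑ g : G, MonoidAlgebra.single g⁻¹ (d g) with hz
  have hcen1 : ∀ h : G, MonoidAlgebra.of ℂ G h * z = z * MonoidAlgebra.of ℂ G h := by
    intro h
    rw [hz, Finset.mul_sum, Finset.sum_mul]
    refine Fintype.sum_equiv ⟨fun x => h * x * h⁻¹, fun x => h⁻¹ * x * h,
      fun x => by group, fun x => by group⟩ _ _ ?_
    intro x
    show MonoidAlgebra.of ℂ G h * MonoidAlgebra.single x⁻¹ (d x) =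
      MonoidAlgebra.single (h * x * h⁻¹)⁻¹ (d (h * x * h⁻¹)) * MonoidAlgebra.of ℂ G h
    rw [hclass x h, MonoidAlgebra.of_apply, MonoidAlgebra.single_mul_single,
      MonoidAlgebra.single_mul_single, one_mul, mul_one]
    congr 1
    group
  have hcen : ∀ a : A, a * z = z * a := by
    intro a
    induction a using MonoidAlgebra.induction_on with
    | of h => exact hcen1 h
    | add f g hf hg => rw [add_mul, mul_add, hf, hg]
    | smul r f hf => rw [smul_mul_assoc, mul_smul_comm, hf]
  have hann : ∀ M : Submodule A A, IsSimpleModule A ↥M → ∀ x ∈ M, z * x = 0 := by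
    intro M hsM x hx
    haveI := hsM
    haveI : Nontrivial ↥M := IsSimpleModule.nontrivial A ↥M
    haveI : FiniteDimensional ℂ ↥M :=
      FiniteDimensional.of_injective (M.subtype.restrictScalars ℂ) Subtype.val_injective
    let ρM : Representation ℂ G ↥M :=
      { toFun := fun g =>
          { toFun := fun m => (MonoidAlgebra.of ℂ G g : A) • m
            map_add' := fun m m' => smul_add _ m m'
            map_smul' := fun c m => smul_comm _ c m }
        map_one' := by
          apply LinearMap.ext; intro m
          show (MonoidAlgebra.of ℂ G 1 : A) • m = m
          rw [map_one]; exact one_smul _ m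
        map_mul' := by
          intro g h
          apply LinearMap.ext; intro m
          show (MonoidAlgebra.of ℂ G (g * h) : A) • m = _
          rw [map_mul, mul_smul]; rfl }
    have hsimpinv : ∀ p : Submodule ℂ ↥M, (∀ (g : G), ∀ m ∈ p, ρM g m ∈ p) → p = ⊥ ∨ p = ⊤ := by
      intro p hp
      let q : Submodule A ↥M :=
        { carrier := (p : Set ↥M)
          add_mem' := fun ha hb => p.add_mem ha hb
          zero_mem' := p.zero_mem
          smul_mem' := by
            intro a m hm
            induction a using MonoidAlgebra.induction_on with
            | of g => exact hp g m hm
            | add f g hf hg => rw [add_smul]; exact p.add_mem hf hg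
            | smul r f hf => rw [smul_assoc]; exact p.smul_mem r hf }
      rcases eq_bot_or_eq_top q with h | h
      · left
        rw [eq_bot_iff]
        intro x hxp
        have hxq : x ∈ q := hxp
        rw [h] at hxq
        simpa using hxq
      · right
        rw [eq_top_iff]
        intro x _
        have hxq : x ∈ q := by rw [h]; trivial
        exact hxq
    haveI hsimple : Simple (FDRep.of ρM) := simple_of_invariant ρM hsimpinv
    let E : Module.End ℂ ↥M := ∑ g : G, d g • (ρM g⁻¹ : ↥M →ₗ[ℂ] ↥M)
    have hE : ∀ m : ↥M, E m = z • m := by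
      intro m
      rw [hz, Finset.sum_smul]
      show (∑ g : G, d g • (ρM g⁻¹ : ↥M →ₗ[ℂ] ↥M)) m = _
      rw [LinearMap.sum_apply]
      refine Finset.sum_congr rfl fun g _ => ?_
      have h1 : (MonoidAlgebra.single g⁻¹ (d g) : A) = d g • (MonoidAlgebra.of ℂ G g⁻¹ : A) := by
        rw [MonoidAlgebra.of_apply, MonoidAlgebra.smul_single', mul_one]
      rw [h1, smul_assoc]
      rfl
    obtain ⟨c, hc⟩ := Module.End.exists_eigenvalue E
    obtain ⟨m₀, hm₀⟩ := hc.exists_hasEigenvector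
    let ψ : ↥M →ₗ[A] ↥M :=
      { toFun := fun m => z • m - c • m
        map_add' := fun m m' => by
          show z • (m + m') - c • (m + m') = (z • m - c • m) + (z • m' - c • m')
          rw [smul_add, smul_add]; abel
        map_smul' := fun a m => by
          show z • (a • m) - c • (a • m) = a • (z • m - c • m)
          have h1 : z • (a • m) = a • (z • m) := by
            rw [smul_smul, smul_smul, hcen a]
          have h2 : c • (a • m) = a • (c • m) := smul_comm c a m
          rw [smul_sub, h1, h2] }
    have hker : LinearMap.ker ψ = ⊤ := by
      rcases eq_bot_or_eq_top (LinearMap.ker ψ) with h | h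
      · exfalso
        have hm : m₀ ∈ LinearMap.ker ψ := by
          have : z • m₀ - c • m₀ = 0 := by
            rw [← hE m₀, hm₀.apply_eq_smul, sub_self]
          exact this
        rw [h] at hm
        exact hm₀.2 (by simpa using hm)
      · exact h
    have hscal : ∀ m : ↥M, E m = c • m := by
      intro m
      have hm : m ∈ LinearMap.ker ψ := by rw [hker]; trivial
      have h2 : z • m - c • m = 0 := hm
      rw [hE m, ← sub_eq_zero]
      exact h2
    have htr0 : LinearMap.trace ℂ ↥M E = 0 := by
      have heq : LinearMap.trace ℂ ↥M E = ∑ g : G, d g * (FDRep.of ρM).character g⁻¹ := by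
        show LinearMap.trace ℂ ↥M (∑ g : G, d g • (ρM g⁻¹ : ↥M →ₗ[ℂ] ↥M)) = _
        rw [map_sum]
        refine Finset.sum_congr rfl fun g _ => ?_
        rw [LinearMap.map_smul]
        rfl
      rw [heq]
      exact horth (FDRep.of ρM) hsimple
    have hEc : LinearMap.trace ℂ ↥M E = c * (Module.finrank ℂ ↥M : ℂ) := by
      have : E = c • (LinearMap.id : ↥M →ₗ[ℂ] ↥M) := by
        apply LinearMap.ext; intro m; rw [hscal m]; rfl
      rw [this, LinearMap.map_smul, LinearMap.trace_id, smul_eq_mul]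
    have hc0 : c = 0 := by
      rw [htr0] at hEc
      rcases mul_eq_zero.mp hEc.symm with h | h
      · exact h
      · exact absurd h (Nat.cast_ne_zero.mpr Module.finrank_pos.ne')
    have hzm : z • (⟨x, hx⟩ : ↥M) = 0 := by
      rw [← hE ⟨x, hx⟩, hscal ⟨x, hx⟩, hc0, zero_smul]
    have h3 := congrArg (Subtype.val) hzm
    simpa [smul_eq_mul] using h3
  have hz0 : z = 0 := by
    let L : A →ₗ[A] A :=
      { toFun := fun x => z * x
        map_add' := fun a b => mul_add z a b
        map_smul' := fun a x => by
          show z * (a • x) = a • (z * x)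
          rw [smul_eq_mul, smul_eq_mul, ← mul_assoc, ← hcen a, mul_assoc] }
    have htop : (⊤ : Submodule A A) ≤ LinearMap.ker L := by
      rw [← IsSemisimpleModule.sSup_simples_eq_top A A]
      apply sSup_le
      intro M hM x hx
      exact hann M hM x hx
    have h1 : (1 : A) ∈ LinearMap.ker L := htop trivial
    have h2 : z * 1 = 0 := h1
    rwa [mul_one] at h2
  have hz0' : (∑ g : G, (Finsupp.single g⁻¹ (d g) : G →₀ ℂ)) = 0 := by
    rw [← MonoidAlgebra.ofCoeff_eq_zero, MonoidAlgebra.ofCoeff_sum]; exact hz0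
  have hg := DFunLike.congr_fun hz0' g₀⁻¹
  have h4 : (∑ g : G, (Finsupp.single g⁻¹ (d g) : G →₀ ℂ)) g₀⁻¹ = d g₀ := by
    rw [Finset.sum_apply']
    rw [Finset.sum_congr rfl (fun g _ => Finsupp.single_apply)]
    rw [Finset.sum_congr rfl (fun g _ => by simp only [inv_inj] :
      ∀ g ∈ Finset.univ, (if g⁻¹ = g₀⁻¹ then d g else 0) = (if g = g₀ then d g else 0))]
    simp
  rw [h4] at hg
  simpa using hg

/-- For a totally orthogonal finite group `G` (every irreducible representation
is real, i.e. has Frobenius–Schur indicator `1`): if the character table sum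
equals the character degree sum, then every element of `G` squares to the
identity and hence `G` is abelian. -/
theorem sq_eq_one_and_abelian_of_totallyOrthogonal_tableSum_eq (G : Type) [Group G] [Fintype G]
    (hreal : ∀ V : FDRep ℂ G, Simple V → ∑ x : G, V.character (x * x) = (Fintype.card G : ℂ))
    (S : Finset (G → ℂ)) (hS : IsIrrFamily G S)
    (heq : tableSum G S = degreeSum G S) :
    (∀ g : G, g * g = 1) ∧ (∀ a b : G, a * b = b * a) := by
  classical
  haveI : Invertible ((Fintype.card G : ℂ)) :=
    invertibleOfNonzero (Nat.cast_ne_zero.mpr Fintype.card_ne_zero)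
  haveI : Fintype (ConjClasses G) := Fintype.ofFinite _
  set r : G → ℕ := fun g => Finset.card (Finset.univ.filter (fun x : G => x * x = g)) with hr
  set T : G → ℂ := fun g => ∑ f ∈ S, f g with hT
  have hcard0 : (Fintype.card G : ℂ) ≠ 0 := Nat.cast_ne_zero.mpr Fintype.card_ne_zero
  -- r is a class function
  have hrconj : ∀ g h : G, r (h * g * h⁻¹) = r g := by
    intro g h
    rw [hr]
    apply Finset.card_bij' (fun y _ => h⁻¹ * y * h) (fun x _ => h * x * h⁻¹)
    · intro y hy
      simp only [Finset.mem_filter, Finset.mem_univ, true_and] at hy ⊢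
      have : (h⁻¹ * y * h) * (h⁻¹ * y * h) = h⁻¹ * (y * y) * h := by group
      rw [this, hy]; group
    · intro x hx
      simp only [Finset.mem_filter, Finset.mem_univ, true_and] at hx ⊢
      have : (h * x * h⁻¹) * (h * x * h⁻¹) = h * (x * x) * h⁻¹ := by group
      rw [this, hx]
    · intro y _; group
    · intro x _; group
  -- T is a class function
  have hTconj : ∀ g h : G, T (h * g * h⁻¹) = T g := by
    intro g h
    rw [hT]
    refine Finset.sum_congr rfl fun f hf => ?_
    obtain ⟨V, hV, hVc⟩ := hS.1 f hf
    rw [← hVc]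
    exact FDRep.char_conj V g h
  -- sum of r against a character
  have hsum_r : ∀ W : FDRep ℂ G, Simple W →
      ∑ g : G, (r g : ℂ) * W.character g⁻¹ = (Fintype.card G : ℂ) := by
    intro W hW
    have h1 : ∀ g : G, (r g : ℂ) * W.character g⁻¹ =
        ∑ x ∈ Finset.univ.filter (fun x : G => x * x = g), W.character ((x * x)⁻¹) := by
      intro g
      rw [Finset.sum_congr rfl (fun x hx => by
        rw [(Finset.mem_filter.mp hx).2] : ∀ x ∈ Finset.univ.filter (fun x : G => x * x = g),
          W.character ((x * x)⁻¹) = W.character g⁻¹)]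
      rw [Finset.sum_const, nsmul_eq_mul]
    rw [Finset.sum_congr rfl fun g _ => h1 g]
    rw [Finset.sum_fiberwise Finset.univ (fun x : G => x * x) (fun x => W.character ((x * x)⁻¹))]
    have h2 : ∑ x : G, W.character ((x * x)⁻¹) = ∑ x : G, W.character (x * x) := by
      refine Fintype.sum_equiv (Equiv.inv G) _ _ fun x => ?_
      simp only [Equiv.inv_apply]
      congr 1
      rw [mul_inv_rev]
    rw [h2]
    exact hreal W hW
  -- orthogonality: sum of f ∈ S against a character
  have horthf : ∀ f ∈ S, ∀ W : FDRep ℂ G, Simple W →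
      ∑ g : G, f g * W.character g⁻¹ = if f = W.character then (Fintype.card G : ℂ) else 0 := by
    intro f hf W hW
    obtain ⟨V, hV, hVc⟩ := hS.1 f hf
    haveI := hV; haveI := hW
    letI : Invertible ((Nat.card G : ℂ)) :=
      invertibleOfNonzero (by rw [Nat.card_eq_fintype_card]; exact hcard0)
    have hmul : ∀ (x y : ℂ), ⅟(Fintype.card G : ℂ) • x = y → x = (Fintype.card G : ℂ) * y := by
      intro x y h
      have h2 := congrArg (fun t => (Fintype.card G : ℂ) * t) h
      simp only [smul_eq_mul, ← mul_assoc, mul_invOf_self, one_mul] at h2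
      exact h2
    have horth : ⅟(Fintype.card G : ℂ) • ∑ g : G, V.character g * W.character g⁻¹ =
        if Nonempty (V ≅ W) then (1:ℂ) else 0 :=
      by
        have h := FDRep.char_orthonormal V W
        rwa [Nat.card_eq_fintype_card, ← invOf_eq_inv, ← smul_eq_mul] at h
    have horthW : ⅟(Fintype.card G : ℂ) • ∑ g : G, W.character g * W.character g⁻¹ =
        if Nonempty (W ≅ W) then (1:ℂ) else 0 :=
      by
        have h := FDRep.char_orthonormal W W
        rwa [Nat.card_eq_fintype_card, ← invOf_eq_inv, ← smul_eq_mul] at h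
    rw [if_pos ⟨Iso.refl W⟩] at horthW
    have hWW : ∑ g : G, W.character g * W.character g⁻¹ = (Fintype.card G : ℂ) := by
      rw [hmul _ _ horthW, mul_one]
    by_cases hiso : Nonempty (V ≅ W)
    · rw [if_pos hiso] at horth
      have hfc : f = W.character := by
        rw [← hVc]
        exact FDRep.char_iso (Classical.choice hiso)
      rw [if_pos hfc, ← hVc]
      rw [hmul _ _ horth, mul_one]
    · rw [if_neg hiso] at horth
      have hsum0 : ∑ g : G, V.character g * W.character g⁻¹ = 0 := by
        rw [hmul _ _ horth, mul_zero]
      have hfc : f ≠ W.character := by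
        intro hfc
        rw [← hVc] at hfc
        rw [hfc] at hsum0
        rw [hWW] at hsum0
        exact hcard0 hsum0
      rw [if_neg hfc, ← hVc]
      exact hsum0
  -- sum of T against a character
  have hsum_T : ∀ W : FDRep ℂ G, Simple W →
      ∑ g : G, T g * W.character g⁻¹ = (Fintype.card G : ℂ) := by
    intro W hW
    rw [hT]
    simp only [Finset.sum_mul]
    rw [Finset.sum_comm]
    rw [Finset.sum_congr rfl fun f hf => horthf f hf W hW]
    rw [Finset.sum_ite_eq' S W.character (fun _ => (Fintype.card G : ℂ))]
    rw [if_pos (hS.2 W hW)]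
  -- completeness: r = T
  have hd : ∀ g : G, (r g : ℂ) = T g := by
    intro g
    have := classfun_eq_zero (fun g => (r g : ℂ) - T g)
      (fun g h => by simp only [hrconj, hTconj])
      (fun W hW => by
        simp only [sub_mul]
        rw [Finset.sum_sub_distrib, hsum_r W hW, hsum_T W hW, sub_self]) g
    exact sub_eq_zero.mp this
  -- assemble
  have hconjout : ∀ g : G, IsConj g (Quotient.out (ConjClasses.mk g)) := by
    intro g
    have h := Quotient.out_eq (ConjClasses.mk g)
    exact (ConjClasses.mk_eq_mk_iff_isConj.mp h).symm
  have htab : tableSum G S = ∑ C : ConjClasses G, (r (Quotient.out C) : ℂ) := by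
    rw [tableSum]
    rw [Finset.sum_congr rfl fun f _ => finsum_eq_sum_of_fintype _]
    rw [Finset.sum_comm]
    refine Finset.sum_congr rfl fun C _ => ?_
    exact (hd (Quotient.out C)).symm
  have hdeg : degreeSum G S = (r 1 : ℂ) := by
    rw [degreeSum]
    exact (hd 1).symm
  set C₀ : ConjClasses G := ConjClasses.mk 1 with hC₀
  have hout1 : Quotient.out C₀ = 1 := by
    have := hconjout (1 : G)
    exact (isConj_one_right.mp this)
  have hkey : ∑ C ∈ Finset.univ.erase C₀, (r (Quotient.out C) : ℂ) = 0 := by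
    have h1 : ∑ C : ConjClasses G, (r (Quotient.out C) : ℂ) = (r 1 : ℂ) := by
      rw [← htab, heq, hdeg]
    rw [← Finset.add_sum_erase Finset.univ _ (Finset.mem_univ C₀)] at h1
    rw [hout1] at h1
    exact add_eq_left.mp h1
  have hr0 : ∀ C : ConjClasses G, C ≠ C₀ → r (Quotient.out C) = 0 := by
    intro C hC
    have h2 : ∑ C ∈ Finset.univ.erase C₀, r (Quotient.out C) = 0 := by
      have := hkey
      rw [← Nat.cast_sum] at this
      exact_mod_cast this
    exact (Finset.sum_eq_zero_iff.mp h2) C (Finset.mem_erase.mpr ⟨hC, Finset.mem_univ C⟩)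
  have hsq : ∀ g : G, g * g = 1 := by
    intro g
    by_cases hC : ConjClasses.mk (g * g) = C₀
    · have : IsConj 1 (g * g) := ConjClasses.mk_eq_mk_iff_isConj.mp hC.symm
      exact isConj_one_right.mp this
    · exfalso
      have h0 : r (Quotient.out (ConjClasses.mk (g * g))) = 0 := hr0 _ hC
      obtain ⟨c, hc⟩ := isConj_iff.mp (hconjout (g * g))
      have hmem : (c * g * c⁻¹) ∈ Finset.univ.filter
          (fun x : G => x * x = Quotient.out (ConjClasses.mk (g * g))) := by
        simp only [Finset.mem_filter, Finset.mem_univ, true_and]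
        rw [← hc]
        group
      exact Finset.card_ne_zero_of_mem hmem h0
  refine ⟨hsq, ?_⟩
  intro a b
  have hinv : ∀ x : G, x⁻¹ = x := fun x => inv_eq_of_mul_eq_one_right (hsq x)
  calc a * b = ((a * b)⁻¹)⁻¹ := (inv_inv _).symm
    _ = (a * b)⁻¹ := hinv _
    _ = b⁻¹ * a⁻¹ := by rw [mul_inv_rev]
    _ = b * a := by rw [hinv a, hinv b]
end

section
/- A partition λ of n is the cycle type of the square of some permutation in S_n if and only if for every i, the multiplicity of the even part 2i in λ is even. -/
/-!
Squaring a `k`-cycle yields two `k/2`-cycles if `k` is even and a `k`-cycle otherwise, so the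
parts of `σ ^ 2` are obtained from those of `σ` by `sqCycleLengths`. An even part `2 * i` of the
result can only come from a part `4 * i` of `σ`, two at a time, whence the multiplicity of `2 * i`
is even. Conversely, if all even parts of `λ` have even multiplicity, merging them in equal pairs
gives a partition `μ` whose image under `sqCycleLengths` is `λ`, and `μ` is the partition of some
permutation.
-/

open Equiv.Perm Multiset
open scoped Finset

/-- The parts of the square of a `k`-cycle, fixed points counted as parts `1` as in
`Equiv.Perm.partition`. -/
def sqCycleLengths (k : ℕ) : Multiset ℕ :=
  if Even k then replicate 2 (k / 2) else {k}

theorem sum_bind_sqCycleLengths (s : Multiset ℕ) : (s.bind sqCycleLengths).sum = s.sum := by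
  have hsum (k : ℕ) : (sqCycleLengths k).sum = k := by
    unfold sqCycleLengths
    split_ifs with hk
    · rw [sum_replicate, smul_eq_mul, Nat.two_mul_div_two_of_even hk]
    · exact sum_singleton k
  rw [sum_bind, map_congr rfl fun k _ => hsum k, map_id']

theorem count_two_mul_sqCycleLengths (k i : ℕ) :
    (sqCycleLengths k).count (2 * i) = 2 * ({k} : Multiset ℕ).count (4 * i) := by
  unfold sqCycleLengths
  split_ifs with hk
  · obtain ⟨j, rfl⟩ := hk
    rw [count_replicate, count_singleton]
    split_ifs <;> omega
  · rw [count_singleton, count_singleton]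
    split_ifs <;> grind

theorem count_two_mul_bind_sqCycleLengths (s : Multiset ℕ) (i : ℕ) :
    (s.bind sqCycleLengths).count (2 * i) = 2 * s.count (4 * i) := by
  induction s using Multiset.induction_on with
  | empty => simp
  | cons k s ih =>
    rw [cons_bind, count_add, ih, count_two_mul_sqCycleLengths, ← mul_add, ← count_add,
      singleton_add]

theorem zero_mem_bind_sqCycleLengths_iff {s : Multiset ℕ} :
    0 ∈ s.bind sqCycleLengths ↔ 0 ∈ s := by
  have hcount := count_two_mul_bind_sqCycleLengths s 0
  rw [mul_zero, mul_zero] at hcount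
  rw [← count_pos, ← count_pos, hcount]
  omega

theorem exists_bind_sqCycleLengths_eq {s : Multiset ℕ} (h : ∀ i, Even (s.count (2 * i))) :
    ∃ t : Multiset ℕ, t.bind sqCycleLengths = s := by
  obtain ⟨E, hE⟩ : ∃ E : Multiset ℕ, s.filter Even = 2 • E := by
    refine exists_smul_of_dvd_count _ fun a ha => ?_
    obtain ⟨i, rfl⟩ := (mem_filter.1 ha).2
    rw [count_filter_of_pos (mem_filter.1 ha).2, ← two_mul]
    exact (h i).two_dvd
  refine ⟨s.filter (¬ Even ·) + E.map (2 * ·), ?_⟩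
  have hodd : (s.filter (¬ Even ·)).bind sqCycleLengths = s.filter (¬ Even ·) := by
    rw [Multiset.bind_congr (g := ({·})) fun k hk => by simp [sqCycleLengths, (mem_filter.1 hk).2],
      bind_singleton, map_id']
  have heven : (E.map (2 * ·)).bind sqCycleLengths = s.filter Even := by
    have hdouble (b : ℕ) : sqCycleLengths (2 * b) = {b} + {b} := by
      simp [sqCycleLengths, replicate_succ]
    rw [Multiset.bind_map, Multiset.bind_congr fun b _ => hdouble b, bind_add, bind_singleton,
      map_id', hE, two_nsmul]
  rw [add_bind, hodd, heven, add_comm, filter_add_not]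

theorem Multiset.eq_filter_two_le_add_replicate {s : Multiset ℕ} (hs : 0 ∉ s) :
    s = s.filter (2 ≤ ·) + replicate (s.sum - (s.filter (2 ≤ ·)).sum) 1 := by
  have hones : s.filter (¬ 2 ≤ ·) = replicate (card (s.filter (¬ 2 ≤ ·))) 1 :=
    eq_replicate_card.2 fun a ha => by
      obtain ⟨has, hlt⟩ := mem_filter.1 ha
      have hne : a ≠ 0 := fun h => hs (h ▸ has)
      omega
  have hsplit : s.filter (2 ≤ ·) + replicate (card (s.filter (¬ 2 ≤ ·))) 1 = s :=
    hones ▸ filter_add_not _ s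
  have hsum := congrArg sum hsplit
  rw [sum_add, sum_replicate, smul_eq_mul, mul_one] at hsum
  rw [← hsum, Nat.add_sub_cancel_left, hsplit]

theorem Multiset.eq_of_sum_eq_of_filter_two_le_eq {s t : Multiset ℕ} (hs : 0 ∉ s) (ht : 0 ∉ t)
    (hsum : s.sum = t.sum) (h : s.filter (2 ≤ ·) = t.filter (2 ≤ ·)) : s = t := by
  rw [eq_filter_two_le_add_replicate hs, eq_filter_two_le_add_replicate ht, hsum, h]

theorem Nat.Partition.zero_notMem_parts {n : ℕ} (p : n.Partition) : 0 ∉ p.parts :=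
  fun h => lt_irrefl 0 (p.parts_pos h)

namespace Equiv.Perm

variable {α : Type*} [Fintype α] [DecidableEq α]

theorem exists_mem_support_pow_apply_eq_self_of_mem_cycleType {g : Perm α} {ℓ : ℕ}
    (h : ℓ ∈ g.cycleType) : ∃ x ∈ g.support, (g ^ ℓ) x = x := by
  obtain ⟨d, τ, rfl, hdisj, hd, rfl⟩ := mem_cycleType_iff.1 h
  obtain ⟨x, hx⟩ := hd.nonempty_support
  have hτx : τ x = x := (hdisj x).resolve_left (mem_support.1 hx)
  refine ⟨x, hdisj.support_mul ▸ Finset.mem_union_left _ hx, ?_⟩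
  rw [hdisj.commute.mul_pow, mul_apply, pow_apply_eq_self_of_apply_eq_self hτx,
    ← hd.orderOf, pow_orderOf_eq_one, one_apply]

theorem IsCycle.cycleType_sq_of_odd {c : Perm α} (hc : c.IsCycle) (hodd : Odd #c.support) :
    (c ^ 2).cycleType = {#c.support} := by
  have hcop : Nat.Coprime 2 (orderOf c) := by
    rw [hc.orderOf, Nat.coprime_two_left]
    exact hodd
  rw [(hc.pow_iff.2 hcop).cycleType, support_pow_coprime hcop]

theorem IsCycle.cycleType_sq_of_even {c : Perm α} (hc : c.IsCycle) {m : ℕ} (hm : 2 ≤ m)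
    (hcard : #c.support = 2 * m) : (c ^ 2).cycleType = replicate 2 m := by
  have horder : orderOf c = 2 * m := hc.orderOf.trans hcard
  have hsupport : (c ^ 2).support = c.support :=
    hc.support_pow_eq_iff.2 (horder ▸ Nat.not_dvd_of_pos_of_lt two_pos (by omega))
  have hparts : ∀ ℓ ∈ (c ^ 2).cycleType, ℓ = m := by
    intro ℓ hℓ
    refine Nat.dvd_antisymm ?_ ?_
    · have hdvd := dvd_of_mem_cycleType hℓ
      rwa [orderOf_pow' c two_ne_zero, horder, Nat.gcd_mul_right_left,
        Nat.mul_div_cancel_left _ two_pos] at hdvd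
    -- a point of `c.support` fixed by `c ^ (2 * ℓ)` forces `c ^ (2 * ℓ) = 1`
    · obtain ⟨x, hx, hfix⟩ := exists_mem_support_pow_apply_eq_self_of_mem_cycleType hℓ
      rw [← pow_mul] at hfix
      rw [hsupport, mem_support] at hx
      have hpow := (hc.pow_eq_one_iff' hx).2 hfix
      rw [← orderOf_dvd_iff_pow_eq_one, horder] at hpow
      exact Nat.dvd_of_mul_dvd_mul_left two_pos hpow
  obtain ⟨k, hk⟩ : ∃ k, (c ^ 2).cycleType = replicate k m := ⟨_, eq_replicate_card.2 hparts⟩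
  have hsum := sum_cycleType (c ^ 2)
  rw [hk, hsupport, hcard, sum_replicate, smul_eq_mul] at hsum
  rw [hk, Nat.eq_of_mul_eq_mul_right (by omega) hsum]

theorem IsCycle.cycleType_sq {c : Perm α} (hc : c.IsCycle) :
    (c ^ 2).cycleType = (sqCycleLengths #c.support).filter (2 ≤ ·) := by
  unfold sqCycleLengths
  split_ifs with heven
  · obtain ⟨m, hm⟩ := heven
    rw [← two_mul] at hm
    rcases (show m = 1 ∨ 2 ≤ m by have := hc.two_le_card_support; omega) with rfl | hm2
    · have hsq : c ^ 2 = 1 := by rw [← pow_orderOf_eq_one c, hc.orderOf, hm, mul_one]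
      rw [hsq, cycleType_one, hm]
      rfl
    · rw [hc.cycleType_sq_of_even hm2 hm, hm, Nat.mul_div_cancel_left _ two_pos,
        filter_eq_self.2 fun a ha => (eq_of_mem_replicate ha).symm ▸ hm2]
  · rw [hc.cycleType_sq_of_odd (Nat.not_even_iff_odd.1 heven),
      filter_singleton, if_pos hc.two_le_card_support]

theorem cycleType_sq (σ : Perm α) :
    (σ ^ 2).cycleType = (σ.cycleType.bind sqCycleLengths).filter (2 ≤ ·) := by
  induction σ using cycle_induction_on with
  | base_one => simp
  | base_cycles c hc => rw [hc.cycleType_sq, hc.cycleType, singleton_bind]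
  | induction_disjoint σ τ hd _ hσ hτ =>
    have hd2 : Disjoint (σ ^ 2) (τ ^ 2) := hd.mono (support_pow_le σ 2) (support_pow_le τ 2)
    rw [hd.commute.mul_pow, hd2.cycleType_mul, hd.cycleType_mul, add_bind, filter_add, hσ, hτ]

theorem partition_sq_parts (σ : Perm α) :
    (σ ^ 2).partition.parts = σ.partition.parts.bind sqCycleLengths := by
  refine eq_of_sum_eq_of_filter_two_le_eq (σ ^ 2).partition.zero_notMem_parts
    (zero_mem_bind_sqCycleLengths_iff.not.2 σ.partition.zero_notMem_parts) ?_ ?_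
  · rw [sum_bind_sqCycleLengths, Nat.Partition.parts_sum, Nat.Partition.parts_sum]
  · have hones (j : ℕ) : ((replicate j 1).bind sqCycleLengths).filter (2 ≤ ·) = 0 :=
      filter_eq_nil.2 fun a ha => by
        obtain ⟨k, hk, ha⟩ := mem_bind.1 ha
        rw [eq_of_mem_replicate hk] at ha
        simp_all [sqCycleLengths]
    rw [filter_parts_partition_eq_cycleType, cycleType_sq, parts_partition, add_bind, filter_add,
      hones, add_zero]

theorem exists_partition_parts_eq {μ : Multiset ℕ} (hμ : 0 ∉ μ)
    (hsum : μ.sum = Fintype.card α) : ∃ σ : Perm α, σ.partition.parts = μ := by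
  have hle : (μ.filter (2 ≤ ·)).sum ≤ μ.sum := by
    conv_rhs => rw [← filter_add_not (2 ≤ ·) μ, sum_add]
    exact le_self_add
  obtain ⟨σ, hσ⟩ := (exists_with_cycleType_iff α).2
    ⟨hsum ▸ hle, fun a ha => (mem_filter.1 ha).2⟩
  refine ⟨σ, eq_of_sum_eq_of_filter_two_le_eq σ.partition.zero_notMem_parts hμ ?_ ?_⟩
  · rw [σ.partition.parts_sum, hsum]
  · rw [filter_parts_partition_eq_cycleType, hσ]

end Equiv.Perm

/-- A partition `λ` of `n` is the cycle type of the square of a permutation in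
`S_n` if and only if every even part `2i` of `λ` has even multiplicity. -/
theorem partition_is_square_cycleType_iff (n : ℕ) (lam : n.Partition) :
    (∃ σ : Equiv.Perm (Fin n), (σ ^ 2).partition.parts = lam.parts) ↔
    ∀ i : ℕ, Even (lam.parts.count (2 * i)) := by
  constructor
  · rintro ⟨σ, hσ⟩ i
    rw [← hσ, partition_sq_parts, count_two_mul_bind_sqCycleLengths]
    exact even_two_mul _
  · intro h
    obtain ⟨μ, hμ⟩ := exists_bind_sqCycleLengths_eq h
    have hμ0 : 0 ∉ μ := zero_mem_bind_sqCycleLengths_iff.not.1 (hμ ▸ lam.zero_notMem_parts)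
    have hμsum : μ.sum = Fintype.card (Fin n) := by
      rw [← sum_bind_sqCycleLengths, hμ, lam.parts_sum, Fintype.card_fin]
    obtain ⟨σ, hσ⟩ := exists_partition_parts_eq hμ0 hμsum
    exact ⟨σ, by rw [partition_sq_parts, hσ, hμ]⟩
end

section
/- The number of partitions λ of n such that some even part of λ has odd multiplicity equals the number of partitions of n having at least one part congruent to 2 mod 4. -/
open Multiset

/-- Halve all multiplicities in a multiset of naturals. -/
noncomputable def halveMul (s : Multiset ℕ) : Multiset ℕ :=
  ((Multiset.toFinsupp s).mapRange (· / 2) (by norm_num)).toMultiset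

lemma count_halveMul (s : Multiset ℕ) (a : ℕ) :
    (halveMul s).count a = s.count a / 2 := by
  simp [halveMul, Finsupp.count_toMultiset, Finsupp.mapRange_apply,
    Multiset.toFinsupp_apply]

/-- Forward map: keep odd parts; replace two copies of an even part `2k` by one `4k`. -/
noncomputable def fMul (s : Multiset ℕ) : Multiset ℕ :=
  s.filter (fun p => ¬ 2 ∣ p) + ((halveMul s).filter (fun p => 2 ∣ p)).map (2 * ·)

/-- Backward map: keep odd parts; replace each part divisible by 4 by two halves. -/
def gMul (t : Multiset ℕ) : Multiset ℕ :=
  t.filter (fun p => ¬ 2 ∣ p) +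
    ((t.filter (fun p => 2 ∣ p)).map (· / 2) + (t.filter (fun p => 2 ∣ p)).map (· / 2))

lemma two_mul_inj : Function.Injective (fun k : ℕ => 2 * k) := by
  intro a b h
  have : 2 * a = 2 * b := h
  omega

lemma count_fMul_odd (s : Multiset ℕ) {q : ℕ} (hq : ¬ 2 ∣ q) :
    (fMul s).count q = s.count q := by
  rw [fMul, count_add, count_filter, if_pos hq]
  have : Multiset.count q (((halveMul s).filter (fun p => 2 ∣ p)).map (2 * ·)) = 0 := by
    rw [count_eq_zero]
    intro hmem
    obtain ⟨k, -, rfl⟩ := Multiset.mem_map.mp hmem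
    exact hq ⟨k, rfl⟩
  omega

lemma count_fMul_even (s : Multiset ℕ) (k : ℕ) :
    (fMul s).count (2 * k) = if 2 ∣ k then s.count k / 2 else 0 := by
  rw [fMul, count_add, count_filter, if_neg (by simp [Dvd.intro k rfl]),
    Multiset.count_map_eq_count' _ _ two_mul_inj, count_filter, count_halveMul, zero_add]

lemma map_two_mul_half (t : Multiset ℕ) :
    ((t.filter (fun p => 2 ∣ p)).map (· / 2)).map (2 * ·) = t.filter (fun p => 2 ∣ p) := by
  rw [Multiset.map_map]
  have : ∀ x ∈ t.filter (fun p => 2 ∣ p), ((2 * · ) ∘ (· / 2)) x = id x := by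
    intro x hx
    have := (Multiset.mem_filter.mp hx).2
    simp [Nat.mul_div_cancel' this]
  rw [Multiset.map_congr rfl this, Multiset.map_id]

lemma count_half (t : Multiset ℕ) (q : ℕ) :
    ((t.filter (fun p => 2 ∣ p)).map (· / 2)).count q = t.count (2 * q) := by
  have h := Multiset.count_map_eq_count' (fun k : ℕ => 2 * k)
    ((t.filter (fun p => 2 ∣ p)).map (· / 2)) two_mul_inj q
  rw [map_two_mul_half, count_filter, if_pos ⟨q, rfl⟩] at h
  exact h.symm

lemma count_gMul_even (t : Multiset ℕ) (k : ℕ) :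
    (gMul t).count (2 * k) = 2 * t.count (2 * (2 * k)) := by
  rw [gMul, count_add, count_add, count_half, count_filter,
    if_neg (by simp [Dvd.intro k rfl])]
  omega

lemma count_gMul_odd (t : Multiset ℕ) {q : ℕ} (hq : ¬ 2 ∣ q)
    (ht : ∀ p ∈ t, p % 4 ≠ 2) : (gMul t).count q = t.count q := by
  have h2 : t.count (2 * q) = 0 := by
    rw [count_eq_zero]
    intro hmem
    exact ht _ hmem (by omega)
  rw [gMul, count_add, count_add, count_half, count_filter, if_pos hq, h2]
  omega

lemma filter_even_eq (s : Multiset ℕ) (he : ∀ i, Even (s.count (2 * i))) :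
    s.filter (fun p => 2 ∣ p) =
      (halveMul s).filter (fun p => 2 ∣ p) + (halveMul s).filter (fun p => 2 ∣ p) := by
  ext a
  rw [count_add, count_filter, count_filter, count_halveMul]
  split_ifs with h1
  · obtain ⟨i, rfl⟩ := h1
    have := (Nat.even_iff).mp (he i)
    omega
  · omega

lemma sum_fMul (s : Multiset ℕ) (he : ∀ i, Even (s.count (2 * i))) :
    (fMul s).sum = s.sum := by
  have key := filter_even_eq s he
  have h1 : (((halveMul s).filter (fun p => 2 ∣ p)).map (2 * ·)).sum
      = (s.filter (fun p => 2 ∣ p)).sum := by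
    rw [key, Multiset.sum_add]
    rw [show ((2 * ·) : ℕ → ℕ) = fun k => 2 * id k from rfl,
      Multiset.sum_map_mul_left, Multiset.map_id]
    ring
  have h2 := Multiset.filter_add_not (fun p => 2 ∣ p) s
  calc (fMul s).sum = (s.filter (fun p => ¬ 2 ∣ p)).sum
        + (((halveMul s).filter (fun p => 2 ∣ p)).map (2 * ·)).sum := Multiset.sum_add _ _
    _ = s.sum := by
        rw [h1, ← Multiset.sum_add, show s.filter (fun p => ¬ 2 ∣ p) + s.filter (fun p => 2 ∣ p)
          = s from by rw [add_comm]; exact h2]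

lemma sum_gMul (t : Multiset ℕ) : (gMul t).sum = t.sum := by
  have h1 : ((t.filter (fun p => 2 ∣ p)).map (· / 2)).sum * 2
      = (t.filter (fun p => 2 ∣ p)).sum := by
    conv_rhs => rw [← map_two_mul_half t]
    rw [show ((2 * ·) : ℕ → ℕ) = fun k => 2 * id k from rfl,
      Multiset.sum_map_mul_left, Multiset.map_id]
    ring
  have h2 := Multiset.filter_add_not (fun p => 2 ∣ p) t
  have h3 : (gMul t).sum = (t.filter (fun p => ¬ 2 ∣ p)).sum
      + (((t.filter (fun p => 2 ∣ p)).map (· / 2)).sum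
        + ((t.filter (fun p => 2 ∣ p)).map (· / 2)).sum) := by
    rw [gMul, Multiset.sum_add, Multiset.sum_add]
  have h4 : t.sum = (t.filter (fun p => 2 ∣ p)).sum + (t.filter (fun p => ¬ 2 ∣ p)).sum := by
    rw [← Multiset.sum_add, h2]
  omega

lemma fMul_pos (s : Multiset ℕ) (hs : ∀ {i : ℕ}, i ∈ s → 0 < i) :
    ∀ {i : ℕ}, i ∈ fMul s → 0 < i := by
  intro i hi
  rcases Multiset.mem_add.mp hi with h | h
  · exact hs (Multiset.mem_of_mem_filter h)
  · obtain ⟨k, hk, rfl⟩ := Multiset.mem_map.mp h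
    have hk' := Multiset.mem_of_mem_filter hk
    rcases Nat.eq_zero_or_pos k with rfl | hpos
    · exfalso
      have : (halveMul s).count 0 ≠ 0 := Multiset.count_ne_zero.mpr hk'
      rw [count_halveMul] at this
      have h0 : s.count 0 = 0 := by
        rw [count_eq_zero]; intro h0; exact absurd (hs h0) (lt_irrefl 0)
      omega
    · omega

lemma gMul_pos (t : Multiset ℕ) (ht : ∀ {i : ℕ}, i ∈ t → 0 < i) :
    ∀ {i : ℕ}, i ∈ gMul t → 0 < i := by
  intro i hi
  rcases Multiset.mem_add.mp hi with h | h
  · exact ht (Multiset.mem_of_mem_filter h)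
  · rcases Multiset.mem_add.mp h with h' | h' <;>
    · obtain ⟨p, hp, rfl⟩ := Multiset.mem_map.mp h'
      have h2 := (Multiset.mem_filter.mp hp).2
      have := ht (Multiset.mem_of_mem_filter hp)
      omega

lemma fMul_no2mod4 (s : Multiset ℕ) : ∀ p ∈ fMul s, p % 4 ≠ 2 := by
  intro p hp
  rcases Multiset.mem_add.mp hp with h | h
  · have := (Multiset.mem_filter.mp h).2
    omega
  · obtain ⟨k, hk, rfl⟩ := Multiset.mem_map.mp h
    have := (Multiset.mem_filter.mp hk).2
    omega

lemma gMul_evenMult (t : Multiset ℕ) : ∀ i, Even ((gMul t).count (2 * i)) := by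
  intro i
  rw [count_gMul_even]
  exact ⟨t.count (2 * (2 * i)), by ring⟩

lemma gMul_fMul (s : Multiset ℕ) (he : ∀ i, Even (s.count (2 * i))) :
    gMul (fMul s) = s := by
  ext a
  by_cases h : 2 ∣ a
  · obtain ⟨k, rfl⟩ := h
    rw [count_gMul_even, count_fMul_even, if_pos ⟨k, rfl⟩]
    have := Nat.even_iff.mp (he k)
    omega
  · rw [count_gMul_odd (fMul s) h (fMul_no2mod4 s), count_fMul_odd s h]

lemma fMul_gMul (t : Multiset ℕ) (ht : ∀ p ∈ t, p % 4 ≠ 2) :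
    fMul (gMul t) = t := by
  ext a
  by_cases h : 2 ∣ a
  · obtain ⟨k, rfl⟩ := h
    rw [count_fMul_even]
    by_cases hk : 2 ∣ k
    · obtain ⟨j, rfl⟩ := hk
      rw [if_pos ⟨j, rfl⟩, count_gMul_even]
      omega
    · rw [if_neg hk]
      have : t.count (2 * k) = 0 := by
        rw [count_eq_zero]
        intro hmem
        exact ht _ hmem (by omega)
      omega
  · rw [count_fMul_odd _ h, count_gMul_odd t h ht]

/-- The bijection between partitions in which every even part has even multiplicity
and partitions with no part congruent to `2` mod `4`. -/
noncomputable def partitionEquiv (n : ℕ) :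
    {lam : n.Partition // ∀ i : ℕ, Even (lam.parts.count (2 * i))} ≃
      {lam : n.Partition // ∀ p ∈ lam.parts, p % 4 ≠ 2} where
  toFun lam := ⟨⟨fMul lam.1.parts, fun h => fMul_pos _ (lam.1.parts_pos) h,
      by rw [sum_fMul _ lam.2, lam.1.parts_sum]⟩, fMul_no2mod4 _⟩
  invFun lam := ⟨⟨gMul lam.1.parts, fun h => gMul_pos _ (lam.1.parts_pos) h,
      by rw [sum_gMul, lam.1.parts_sum]⟩, gMul_evenMult _⟩
  left_inv lam := by
    ext1
    apply Nat.Partition.ext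
    exact gMul_fMul _ lam.2
  right_inv lam := by
    ext1
    apply Nat.Partition.ext
    exact fMul_gMul _ lam.2

/-- The number of partitions of `n` in which some even part has odd multiplicity
equals the number of partitions of `n` having at least one part congruent to
`2 mod 4`. -/
theorem card_partitions_even_part_odd_mult (n : ℕ) :
    Nat.card {lam : n.Partition // ∃ i : ℕ, ¬ Even (lam.parts.count (2 * i))} =
      Nat.card {lam : n.Partition // ∃ p ∈ lam.parts, p % 4 = 2} := by
  classical
  have hcompl : Nat.card {lam : n.Partition // ¬ ∃ i : ℕ, ¬ Even (lam.parts.count (2 * i))} =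
      Nat.card {lam : n.Partition // ¬ ∃ p ∈ lam.parts, p % 4 = 2} := by
    have e1 : {lam : n.Partition // ¬ ∃ i : ℕ, ¬ Even (lam.parts.count (2 * i))} ≃
        {lam : n.Partition // ∀ i : ℕ, Even (lam.parts.count (2 * i))} :=
      Equiv.subtypeEquivRight (by intro x; push_neg; rfl)
    have e2 : {lam : n.Partition // ¬ ∃ p ∈ lam.parts, p % 4 = 2} ≃
        {lam : n.Partition // ∀ p ∈ lam.parts, p % 4 ≠ 2} :=
      Equiv.subtypeEquivRight (by intro x; push_neg; rfl)
    rw [Nat.card_congr e1, Nat.card_congr e2, Nat.card_congr (partitionEquiv n)]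
  have h1 := Fintype.card_subtype_compl (fun lam : n.Partition =>
    ∃ i : ℕ, ¬ Even (lam.parts.count (2 * i)))
  have h2 := Fintype.card_subtype_compl (fun lam : n.Partition =>
    ∃ p ∈ lam.parts, p % 4 = 2)
  have hle1 := Fintype.card_subtype_le (fun lam : n.Partition =>
    ∃ i : ℕ, ¬ Even (lam.parts.count (2 * i)))
  have hle2 := Fintype.card_subtype_le (fun lam : n.Partition =>
    ∃ p ∈ lam.parts, p % 4 = 2)
  simp only [Nat.card_eq_fintype_card] at *
  omega
end

section
/- For every positive integer n, the number of involutions in the hyperoctahedral group B_n satisfies √(2n) ≤ i_n^B / i_{n−1}^B ≤ √(2n) + 2. -/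
/-- Negation on `{±1,…,±n}`, modelled as `Fin n × ZMod 2` with `(i,s) ↦ (i,s+1)`. -/
def negPerm (n : ℕ) : Equiv.Perm (Fin n × ZMod 2) :=
  Equiv.prodCongr (Equiv.refl (Fin n)) (Equiv.addLeft (1 : ZMod 2))

/-- The hyperoctahedral group `B_n` of signed permutations: permutations of
`{±1,…,±n}` commuting with negation. -/
def hyperoctahedral (n : ℕ) : Subgroup (Equiv.Perm (Fin n × ZMod 2)) :=
  Subgroup.centralizer {negPerm n}

/-- The number of involutions `i_n^B` in `B_n`. -/
noncomputable def iB (n : ℕ) : ℕ :=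
  Nat.card {x : Equiv.Perm (Fin n × ZMod 2) // x ∈ hyperoctahedral n ∧ x ^ 2 = 1}

/-!
An involution of `B_n` is an involution `f` of `{1, …, n}` together with signs `ε` constant on
the orbits of `f`. Splitting off the orbit of one point gives
`i_{n+2} = 2 i_{n+1} + 2 (n + 1) i_n`, so the ratio `r_n = i_{n+1} / i_n` satisfies
`r_{n+1} = 2 + s² / r_n` with `s = √(2(n+1))`. As `r ↦ 2 + s² / r` is decreasing, it maps
`[s, s + 2]` into `[t, t + 2]` for `t = √(2(n+2))`, and induction on `n` gives the bounds.
-/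

@[ext]
structure SignedInvolution (α : Type*) where
  toFun : α → α
  sign : α → ZMod 2
  involutive : Function.Involutive toFun
  sign_apply : ∀ i, sign (toFun i) = sign i

namespace SignedInvolution

variable {α β : Type*}

instance [Finite α] : Finite (SignedInvolution α) :=
  Finite.of_injective (fun q => (q.toFun, q.sign)) fun _ _ h =>
    SignedInvolution.ext (congrArg Prod.fst h) (congrArg Prod.snd h)

instance : Nonempty (SignedInvolution α) :=
  ⟨⟨id, 0, fun _ => rfl, fun _ => rfl⟩⟩

def congr (e : α ≃ β) : SignedInvolution α ≃ SignedInvolution β where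
  toFun q := ⟨e ∘ q.toFun ∘ e.symm, q.sign ∘ e.symm, fun i => by simp [q.involutive _],
    fun i => by simp [q.sign_apply]⟩
  invFun q := ⟨e.symm ∘ q.toFun ∘ e, q.sign ∘ e, fun i => by simp [q.involutive _],
    fun i => by simp [q.sign_apply]⟩
  left_inv q := by ext <;> simp
  right_inv q := by ext <;> simp

def toPerm (q : SignedInvolution α) : Equiv.Perm (α × ZMod 2) :=
  Function.Involutive.toPerm (fun p => (q.toFun p.1, p.2 + q.sign p.1)) fun p => by
    simp [q.involutive p.1, q.sign_apply, add_assoc, CharTwo.add_self_eq_zero]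

@[simp]
theorem toPerm_apply (q : SignedInvolution α) (p : α × ZMod 2) :
    q.toPerm p = (q.toFun p.1, p.2 + q.sign p.1) :=
  rfl

section fiber

variable [DecidableEq α]

/-- The case `b = a` of a fixed point is included: the orbit `{a, b}` is then `{a}`. -/
def fiberEquiv (a b : α) :
    {q : SignedInvolution α // q.toFun a = b} ≃
      ZMod 2 × SignedInvolution {x // x ≠ a ∧ x ≠ b} where
  toFun q := (q.1.sign a,
    { toFun := fun x => ⟨q.1.toFun x,
        fun h => x.2.2 ((q.1.involutive.eq_iff.1 h).trans q.2),
        fun h => x.2.1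
          ((q.1.involutive.eq_iff.1 h).trans (q.1.involutive.eq_iff.1 q.2).symm)⟩
      sign := fun x => q.1.sign x
      involutive := fun x => Subtype.ext (q.1.involutive x)
      sign_apply := fun x => q.1.sign_apply x })
  invFun p :=
    ⟨{ toFun := fun x =>
         if hx : x ≠ a ∧ x ≠ b then p.2.toFun ⟨x, hx⟩ else if x = a then b else a
       sign := fun x => if hx : x ≠ a ∧ x ≠ b then p.2.sign ⟨x, hx⟩ else p.1
       involutive := fun x => by
         by_cases hx : x ≠ a ∧ x ≠ b
         · simp [hx, (p.2.toFun ⟨x, hx⟩).2, p.2.involutive _]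
         · rcases not_and_or.1 hx |>.imp not_not.1 not_not.1 with h | h <;>
             by_cases a = b <;> simp_all
       sign_apply := fun x => by
         by_cases hx : x ≠ a ∧ x ≠ b
         · simp [hx, (p.2.toFun ⟨x, hx⟩).2, p.2.sign_apply]
         · rcases not_and_or.1 hx |>.imp not_not.1 not_not.1 with h | h <;>
             by_cases a = b <;> simp_all },
      by simp⟩
  left_inv q := by
    obtain ⟨q, rfl⟩ := q
    ext x <;> by_cases hx : x ≠ a ∧ x ≠ q.toFun a <;> simp [hx]
    all_goals rcases not_and_or.1 hx |>.imp not_not.1 not_not.1 with rfl | rfl <;>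
      simp [q.involutive _, q.sign_apply]
  right_inv p := by
    ext x
    · simp
    · simp [x.2.1, x.2.2]
    · simp [x.2]

theorem card_eq_sum [Fintype α] (a : α) :
    Nat.card (SignedInvolution α) =
      ∑ b, 2 * Nat.card (SignedInvolution {x // x ≠ a ∧ x ≠ b}) := by
  rw [← Nat.card_congr (Equiv.sigmaFiberEquiv fun q : SignedInvolution α => q.toFun a),
    Nat.card_sigma]
  simp [Nat.card_congr (fiberEquiv a _), Nat.card_prod]

end fiber

end SignedInvolution

theorem apply_eq_of_mem_hyperoctahedral {n : ℕ} {x : Equiv.Perm (Fin n × ZMod 2)}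
    (hx : x ∈ hyperoctahedral n) (i : Fin n) (s : ZMod 2) :
    x (i, s) = ((x (i, 0)).1, s + (x (i, 0)).2) := by
  have hneg := congrArg (· (i, 0)) (Subgroup.mem_centralizer_singleton_iff.1 hx)
  obtain rfl | rfl : s = 0 ∨ s = 1 := by revert s; decide
  · simp
  · simpa [negPerm, Prod.map] using hneg

def involutionEquiv (n : ℕ) :
    {x : Equiv.Perm (Fin n × ZMod 2) // x ∈ hyperoctahedral n ∧ x ^ 2 = 1} ≃
      SignedInvolution (Fin n) where
  toFun x :=
    have hsq (i : Fin n) : (x.1 ((x.1 (i, 0)).1, 0)).1 = i ∧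
        (x.1 (i, 0)).2 + (x.1 ((x.1 (i, 0)).1, 0)).2 = 0 := by
      have h : x.1 (x.1 (i, 0)) = (i, 0) := by simpa [sq] using congrArg (· (i, 0)) x.2.2
      rw [apply_eq_of_mem_hyperoctahedral x.2.1] at h
      simpa [Prod.ext_iff] using h
    { toFun i := (x.1 (i, 0)).1
      sign i := (x.1 (i, 0)).2
      involutive i := (hsq i).1
      sign_apply i := (CharTwo.add_eq_zero.1 (hsq i).2).symm }
  invFun q := ⟨q.toPerm, by
    refine ⟨Subgroup.mem_centralizer_singleton_iff.2 ?_, ?_⟩ <;> ext ⟨i, s⟩ <;>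
      simp [negPerm, sq, q.involutive _, q.sign_apply, add_assoc,
        add_left_comm, CharTwo.add_self_eq_zero]⟩
  left_inv x := by
    ext ⟨i, s⟩ <;> simp [apply_eq_of_mem_hyperoctahedral x.2.1 i s]
  right_inv q := by ext <;> simp

theorem iB_eq_card_signedInvolution (n : ℕ) : iB n = Nat.card (SignedInvolution (Fin n)) :=
  Nat.card_congr (involutionEquiv n)

theorem card_signedInvolution_eq_iB (α : Type*) [Finite α] :
    Nat.card (SignedInvolution α) = iB (Nat.card α) := by
  rw [iB_eq_card_signedInvolution, Nat.card_congr (SignedInvolution.congr (Finite.equivFin α))]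

theorem iB_zero : iB 0 = 1 := by
  rw [iB_eq_card_signedInvolution, Nat.card_eq_one_iff_unique]
  exact ⟨⟨fun _ _ => SignedInvolution.ext (funext (·.elim0)) (funext (·.elim0))⟩,
    inferInstance⟩

theorem iB_one : iB 1 = 2 := by
  rw [iB_eq_card_signedInvolution, SignedInvolution.card_eq_sum 0]
  simp [card_signedInvolution_eq_iB, iB_zero]

theorem Nat.card_subtype_ne_and_ne {α : Type*} [Fintype α] [DecidableEq α] (a b : α) :
    Nat.card {x // x ≠ a ∧ x ≠ b} = Fintype.card α - ({a, b} : Finset α).card := by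
  have : ({x | x ≠ a ∧ x ≠ b} : Finset α) = {a, b}ᶜ := by ext; simp
  rw [Nat.card_eq_fintype_card, Fintype.card_subtype, this, Finset.card_compl]

theorem iB_add_two (n : ℕ) : iB (n + 2) = 2 * iB (n + 1) + 2 * (n + 1) * iB n := by
  rw [iB_eq_card_signedInvolution, SignedInvolution.card_eq_sum 0,
    Fintype.sum_eq_add_sum_compl 0]
  have hswap : ∀ b ∈ ({0}ᶜ : Finset (Fin (n + 2))),
      2 * Nat.card (SignedInvolution {x // x ≠ 0 ∧ x ≠ b}) = 2 * iB n := by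
    intro b hb
    have hb0 : b ≠ 0 := by simpa using hb
    rw [card_signedInvolution_eq_iB, Nat.card_subtype_ne_and_ne, Finset.card_pair hb0.symm]
    simp
  rw [Finset.sum_congr rfl hswap, card_signedInvolution_eq_iB, Nat.card_subtype_ne_and_ne]
  simp [Finset.card_compl]
  ring

theorem iB_pos (n : ℕ) : 0 < iB n := by
  rw [iB_eq_card_signedInvolution]
  exact Nat.card_pos

theorem two_add_sq_div_mem_Icc {s t r : ℝ} (hs : 0 < s) (ht : 0 ≤ t) (hts : t ^ 2 = s ^ 2 + 2)
    (hr : r ∈ Set.Icc s (s + 2)) : 2 + s ^ 2 / r ∈ Set.Icc t (t + 2) := by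
  obtain ⟨hsr, hrs⟩ := hr
  constructor
  · -- checked after squaring, using `t ^ 2 = s ^ 2 + 2`
    have key : t * (s + 2) ≤ s ^ 2 + 2 * s + 4 :=
      (abs_le_of_sq_le_sq' (by nlinarith) (by positivity)).2
    calc t ≤ 2 + s ^ 2 / (s + 2) := by
          rw [← sub_le_iff_le_add', le_div_iff₀ (by positivity)]; linarith
      _ ≤ 2 + s ^ 2 / r := by gcongr; linarith
  · have hst : s ≤ t := (abs_le_of_sq_le_sq' (by linarith) ht).2
    calc 2 + s ^ 2 / r ≤ 2 + s ^ 2 / s := by gcongr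
      _ = s + 2 := by rw [sq, mul_self_div_self]; ring
      _ ≤ t + 2 := by linarith

theorem ratio_mem_Icc_of_recurrence {a : ℕ → ℝ} (hpos : ∀ n, 0 < a n) (h₁ : a 1 = 2 * a 0)
    (hrec : ∀ n, a (n + 2) = 2 * a (n + 1) + 2 * (n + 1) * a n) (n : ℕ) :
    a (n + 1) / a n ∈ Set.Icc √(2 * (n + 1)) (√(2 * (n + 1)) + 2) := by
  induction n with
  | zero =>
    have : √2 ≤ 2 := Real.sqrt_le_iff.2 ⟨by norm_num, by norm_num⟩
    rw [h₁, mul_div_assoc, div_self (hpos 0).ne']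
    norm_num [this]
  | succ n ih =>
    have hts : √(2 * ((n + 1 : ℕ) + 1)) ^ 2 = √(2 * (n + 1)) ^ 2 + 2 := by
      rw [Real.sq_sqrt (by positivity), Real.sq_sqrt (by positivity)]; push_cast; ring
    have hratio : a (n + 2) / a (n + 1) = 2 + √(2 * (n + 1)) ^ 2 / (a (n + 1) / a n) := by
      have := hpos n
      have := hpos (n + 1)
      rw [hrec, Real.sq_sqrt (by positivity)]
      field_simp
    rw [hratio]
    exact two_add_sq_div_mem_Icc (by positivity) (Real.sqrt_nonneg _) hts ih

/-- For every positive `n`, `√(2n) ≤ i_n^B / i_{n-1}^B ≤ √(2n) + 2`. -/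
theorem iB_ratio_bounds (n : ℕ) (hn : 1 ≤ n) :
    Real.sqrt (2 * n) ≤ (iB n : ℝ) / (iB (n - 1) : ℝ) ∧
    (iB n : ℝ) / (iB (n - 1) : ℝ) ≤ Real.sqrt (2 * n) + 2 := by
  obtain ⟨m, rfl⟩ := Nat.exists_eq_add_of_le' hn
  have hpos (k : ℕ) : (0 : ℝ) < iB k := by exact_mod_cast iB_pos k
  have h₁ : (iB 1 : ℝ) = 2 * iB 0 := by simp [iB_one, iB_zero]
  have hrec (k : ℕ) : (iB (k + 2) : ℝ) = 2 * iB (k + 1) + 2 * (k + 1) * iB k := by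
    exact_mod_cast iB_add_two k
  simpa using ratio_mem_Icc_of_recurrence hpos h₁ hrec m
end

section
/- Let r be a positive integer and consider the generalized symmetric group G(r,1,n) = ℤ_r ≀ S_n. An r-tuple of partitions (λ⁰ | λ¹ | … | λ^{r−1}) with total size n is the cycle type of an absolute square π·π̄ for some π ∈ G(r,1,n) if and only if: (1) every even part of λ⁰ has even multiplicity; (2) λ^t = λ^{r−t} for all 1 ≤ t < r/2; and (3) when r is even, every part of λ^{r/2} has even multiplicity. -/
/-- The color shift `(i,k) ↦ (i,k+1)` on `Fin n × ZMod r`. -/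
def shiftPerm (r n : ℕ) : Equiv.Perm (Fin n × ZMod r) :=
  Equiv.prodCongr (Equiv.refl (Fin n)) (Equiv.addLeft (1 : ZMod r))

/-- The generalized symmetric group `G(r,1,n) = ℤ_r ≀ S_n`, realized as the
subgroup of permutations of `Fin n × ZMod r` commuting with the color shift. -/
def genSym (r n : ℕ) : Subgroup (Equiv.Perm (Fin n × ZMod r)) :=
  Subgroup.centralizer {shiftPerm r n}

/-- Color negation `(i,k) ↦ (i,-k)`. -/
def etaPerm (r n : ℕ) : Equiv.Perm (Fin n × ZMod r) :=
  Equiv.prodCongr (Equiv.refl (Fin n)) (Equiv.neg (ZMod r))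

/-- The bar operation `(z;σ)‾ = (−z;σ)` on `G(r,1,n)`, i.e. conjugation by
color negation; `π * barPerm r n π` is the absolute square of `π`. -/
def barPerm (r n : ℕ) (π : Equiv.Perm (Fin n × ZMod r)) :
    Equiv.Perm (Fin n × ZMod r) :=
  etaPerm r n * π * etaPerm r n


/-- The length of the cycle of `i` under the permutation of `Fin n` underlying `P`. -/
noncomputable def cycLen (r n : ℕ) (P : Equiv.Perm (Fin n × ZMod r)) (i : Fin n) : ℕ :=
  Function.minimalPeriod (fun j : Fin n => (P (j, (0 : ZMod r))).1) i

/-- The color of the cycle of `i` under `P ∈ G(r,1,n)`: the sum of the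
`ZMod r`-entries along the cycle, read off from `P^d (i,0) = (i, color)`. -/
noncomputable def cycColor (r n : ℕ) (P : Equiv.Perm (Fin n × ZMod r)) (i : Fin n) :
    ZMod r :=
  ((P ^ cycLen r n P i) (i, (0 : ZMod r))).2

/-- `Λ` is the cycle type of `P ∈ G(r,1,n)`: for each color `t`, `Λ t` is the
multiset of lengths of the cycles of color `t`, so that for each `d` the points
lying on cycles of length `d` and color `t` number `d · (Λ t).count d`. -/
noncomputable def IsGrnCycleType (r n : ℕ) (P : Equiv.Perm (Fin n × ZMod r))
    (Λ : ZMod r → Multiset ℕ) : Prop :=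
  ∀ (t : ZMod r) (d : ℕ), 0 < d →
    d * (Λ t).count d =
      Nat.card {i : Fin n // cycLen r n P i = d ∧ cycColor r n P i = t}


open Function Finset



namespace GrnAux

variable {r : ℕ} {α : Type*} {β : Type*}

/-- length of the cycle of `x` under `s ∘ s`. -/
noncomputable def alen (s : α → α) (x : α) : ℕ := Function.minimalPeriod (s ∘ s) x

/-- color of the cycle of `x`. -/
noncomputable def acol (s : α → α) (z : α → ZMod r) (x : α) : ZMod r :=
  ∑ j ∈ Finset.range (alen s x), (z (s ((s ∘ s)^[j] x)) - z ((s ∘ s)^[j] x))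

noncomputable def AbsCount (s : α → α) (z : α → ZMod r) (Λ : ZMod r → Multiset ℕ) : Prop :=
  ∀ (t : ZMod r) (d : ℕ), 0 < d →
    d * (Λ t).count d = Nat.card {x : α // alen s x = d ∧ acol s z x = t}

lemma minimalPeriod_comp_inj {f : α → α} {g : β → β} {e : α → β} (he : Function.Injective e)
    (hc : ∀ x, g (e x) = e (f x)) (x : α) :
    Function.minimalPeriod g (e x) = Function.minimalPeriod f x := by
  have hit : ∀ k y, g^[k] (e y) = e (f^[k] y) := by
    intro k
    induction k with
    | zero => simp
    | succ m ih =>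
      intro y
      rw [Function.iterate_succ_apply, Function.iterate_succ_apply, hc y, ih]
  rw [Function.minimalPeriod_eq_minimalPeriod_iff]
  intro k
  constructor
  · intro h
    have : e (f^[k] x) = e x := by rw [← hit]; exact h
    exact he this
  · intro h
    show g^[k] (e x) = e x
    rw [hit, h]

lemma alen_comp {s : α → α} {s' : β → β} {e : α → β} (he : Function.Injective e)
    (hc : ∀ x, s' (e x) = e (s x)) (x : α) : alen s' (e x) = alen s x :=
  minimalPeriod_comp_inj he (fun y => by simp only [Function.comp_apply, hc]) x

lemma iterate_comp_eq {s : α → α} {s' : β → β} {e : α → β}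
    (hc : ∀ x, s' (e x) = e (s x)) (j : ℕ) (x : α) :
    (s' ∘ s')^[j] (e x) = e ((s ∘ s)^[j] x) := by
  induction j generalizing x with
  | zero => simp
  | succ m ih =>
    rw [Function.iterate_succ_apply, Function.iterate_succ_apply]
    rw [show (s' ∘ s') (e x) = e ((s ∘ s) x) from by simp only [Function.comp_apply, hc], ih]

lemma acol_comp {s : α → α} {s' : β → β} {z : α → ZMod r} {z' : β → ZMod r} {e : α → β}
    (he : Function.Injective e) (hc : ∀ x, s' (e x) = e (s x)) (hz : ∀ x, z' (e x) = z x)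
    (x : α) : acol s' z' (e x) = acol s z x := by
  unfold acol
  rw [alen_comp he hc]
  refine Finset.sum_congr rfl fun j _ => ?_
  rw [iterate_comp_eq hc, hc, hz, hz]

lemma absCount_comp {s : α → α} {s' : β → β} {z : α → ZMod r} {z' : β → ZMod r} (e : α ≃ β)
    (hc : ∀ x, s' (e x) = e (s x)) (hz : ∀ x, z' (e x) = z x)
    {Λ : ZMod r → Multiset ℕ} (h : AbsCount s z Λ) : AbsCount s' z' Λ := by
  intro t d hd
  rw [h t d hd]
  refine Nat.card_congr (Equiv.subtypeEquiv e fun x => ?_)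
  rw [alen_comp e.injective hc, acol_comp e.injective hc hz]

section Finite

variable [Finite α] {s : α → α} (hs : Function.Bijective s) {z : α → ZMod r}

lemma periodic_of_bij {f : α → α} (hf : Function.Bijective f) (x : α) :
    x ∈ Function.periodicPts f := by
  classical
  let e : Equiv.Perm α := Equiv.ofBijective f hf
  have hpow : ∀ k y, f^[k] y = (e ^ k) y := by
    intro k
    induction k with
    | zero => simp
    | succ m ih =>
      intro y
      rw [Function.iterate_succ_apply, pow_succ, Equiv.Perm.mul_apply, ← ih]
      rfl
  refine ⟨orderOf e, orderOf_pos e, ?_⟩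
  show f^[orderOf e] x = x
  rw [hpow, pow_orderOf_eq_one]
  rfl

include hs

lemma comp_bij : Function.Bijective (s ∘ s) := hs.comp hs

lemma alen_pos (x : α) : 0 < alen s x :=
  Function.minimalPeriod_pos_of_mem_periodicPts (periodic_of_bij (hs.comp hs) x)

lemma iterate_alen (x : α) : (s ∘ s)^[alen s x] x = x := Function.iterate_minimalPeriod

lemma alen_apply (x : α) : alen s (s x) = alen s x :=
  alen_comp hs.injective (fun _ => rfl) x

lemma alen_u_apply (x : α) : alen s (s (s x)) = alen s x := by
  rw [alen_apply hs, alen_apply hs]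

lemma iterate_u_s_comm (j : ℕ) (x : α) : (s ∘ s)^[j] (s x) = s ((s ∘ s)^[j] x) := by
  induction j generalizing x with
  | zero => rfl
  | succ m ih =>
    rw [Function.iterate_succ_apply, Function.iterate_succ_apply]
    exact ih ((s ∘ s) x)

lemma acol_add_acol_apply (x : α) : acol s z x + acol s z (s x) = 0 := by
  unfold acol
  rw [alen_apply hs]
  rw [← Finset.sum_add_distrib]
  have : ∀ j ∈ Finset.range (alen s x),
      (z (s ((s ∘ s)^[j] x)) - z ((s ∘ s)^[j] x)) +
        (z (s ((s ∘ s)^[j] (s x))) - z ((s ∘ s)^[j] (s x))) =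
      z ((s ∘ s)^[j + 1] x) - z ((s ∘ s)^[j] x) := by
    intro j _
    rw [iterate_u_s_comm hs j x, Function.iterate_succ_apply']
    simp only [Function.comp_apply]
    ring
  rw [Finset.sum_congr rfl this, Finset.sum_range_sub (fun j => z ((s ∘ s)^[j] x)),
    iterate_alen hs x]
  simp

lemma acol_apply (x : α) : acol s z (s x) = - acol s z x := by
  have := acol_add_acol_apply hs (z := z) x
  linear_combination this

/-- the sum of colors along the `s∘s`-orbit. -/
noncomputable def osum (s : α → α) (z : α → ZMod r) (x : α) : ZMod r :=
  ∑ j ∈ Finset.range (alen s x), z ((s ∘ s)^[j] x)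

lemma osum_u_apply (x : α) : osum s z ((s ∘ s) x) = osum s z x := by
  unfold osum
  rw [show (s ∘ s) x = s (s x) from rfl, alen_u_apply hs]
  have h1 : ∀ j ∈ Finset.range (alen s x), z ((s ∘ s)^[j] (s (s x))) = z ((s ∘ s)^[j+1] x) := by
    intro j _
    rw [show s (s x) = (s ∘ s) x from rfl, ← Function.iterate_succ_apply]
  rw [Finset.sum_congr rfl h1]
  have h2 := Finset.sum_range_sub (fun j => z ((s ∘ s)^[j] x)) (alen s x)
  have h3 : (s ∘ s)^[alen s x] x = x := iterate_alen hs x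
  have h4 : ∀ L : ℕ, ∑ j ∈ Finset.range L, z ((s ∘ s)^[j+1] x)
      = ∑ j ∈ Finset.range L, z ((s ∘ s)^[j] x) + z ((s∘s)^[L] x) - z x := by
    intro L
    induction L with
    | zero => simp
    | succ m ih => rw [Finset.sum_range_succ, ih, Finset.sum_range_succ]; ring_nf
  rw [h4, h3]
  ring

lemma osum_u_iterate (m : ℕ) (x : α) : osum s z ((s ∘ s)^[m] x) = osum s z x := by
  induction m generalizing x with
  | zero => rfl
  | succ k ih => rw [Function.iterate_succ_apply, ih, osum_u_apply hs]

lemma acol_eq_osum_sub (x : α) : acol s z x = osum s z (s x) - osum s z x := by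
  unfold acol osum
  rw [alen_apply hs, Finset.sum_sub_distrib]
  congr 1
  refine Finset.sum_congr rfl fun j _ => ?_
  rw [iterate_u_s_comm hs j x]

lemma acol_of_odd {x : α} (hodd : Odd (Function.minimalPeriod s x)) : acol s z x = 0 := by
  have hmp : 0 < Function.minimalPeriod s x :=
    Function.minimalPeriod_pos_of_mem_periodicPts (periodic_of_bij hs x)
  set ℓ := Function.minimalPeriod s x with hℓ
  have hus : ∀ m y, (s ∘ s)^[m] y = s^[2 * m] y := by
    intro m
    induction m with
    | zero => simp
    | succ k ih =>
      intro y
      rw [Function.iterate_succ_apply', ih, show 2 * (k+1) = (2*k) + 1 + 1 by ring,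
        Function.iterate_succ_apply', Function.iterate_succ_apply']
      rfl
  have hsx : (s ∘ s)^[(ℓ + 1)/2] x = s x := by
    obtain ⟨k, hk⟩ := hodd
    rw [hus, show 2 * ((ℓ+1)/2) = ℓ + 1 from by omega,
      Function.iterate_succ_apply', Function.iterate_minimalPeriod]
  rw [acol_eq_osum_sub hs, ← hsx, osum_u_iterate hs, sub_self]

end Finite

-- divisibility




lemma orbit_card_dvd [Fintype α] [DecidableEq α] (f : α → α) (T : Finset α) (m : ℕ)
    (hm : 0 < m) (hp : ∀ x ∈ T, Function.minimalPeriod f x = m)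
    (hinv : ∀ x ∈ T, f x ∈ T) : m ∣ T.card := by
  classical
  set O : α → Finset α := fun x => Finset.univ.filter (fun y => ∃ j, f^[j] x = y) with hO
  have memO : ∀ x y, y ∈ O x ↔ ∃ j, f^[j] x = y := by
    intro x y; simp [hO]
  have hTiter : ∀ x ∈ T, ∀ j, f^[j] x ∈ T := by
    intro x hx j
    induction j with
    | zero => simpa using hx
    | succ k ih => rw [Function.iterate_succ_apply']; exact hinv _ ih
  have hOsub : ∀ x ∈ T, O x ⊆ T := by
    intro x hx y hy
    obtain ⟨j, rfl⟩ := (memO x y).mp hy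
    exact hTiter x hx j
  have hOapp : ∀ x ∈ T, O (f x) = O x := by
    intro x hx
    ext y
    rw [memO, memO]
    constructor
    · rintro ⟨j, rfl⟩
      exact ⟨j + 1, (Function.iterate_succ_apply f j x).symm⟩
    · rintro ⟨j, rfl⟩
      refine ⟨j + (m - 1), ?_⟩
      have : f^[j + (m-1)] (f x) = f^[j + m] x := by
        rw [← Function.iterate_succ_apply]
        congr 1
        omega
      rw [this, Function.iterate_add_apply, show f^[m] x = x from ?_]
      · rw [← hp x hx]; exact Function.iterate_minimalPeriod
  have hOiter : ∀ x ∈ T, ∀ j, O (f^[j] x) = O x := by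
    intro x hx j
    induction j with
    | zero => rfl
    | succ k ih =>
      rw [Function.iterate_succ_apply', hOapp _ (hTiter x hx k), ih]
  have hOmem : ∀ x ∈ T, ∀ y ∈ O x, O y = O x := by
    intro x hx y hy
    obtain ⟨j, rfl⟩ := (memO x y).mp hy
    exact hOiter x hx j
  have hself : ∀ x, x ∈ O x := fun x => (memO x x).mpr ⟨0, rfl⟩
  have hcardO : ∀ x ∈ T, (O x).card = m := by
    intro x hx
    have hper : Function.minimalPeriod f x = m := hp x hx
    have him : O x = (Finset.range m).image (fun j => f^[j] x) := by
      ext y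
      rw [memO]
      simp only [Finset.mem_image, Finset.mem_range]
      constructor
      · rintro ⟨j, rfl⟩
        refine ⟨j % m, ?_, ?_⟩
        · exact Nat.mod_lt _ hm
        · rw [← hper]; exact Function.iterate_mod_minimalPeriod_eq
      · rintro ⟨j, _, rfl⟩; exact ⟨j, rfl⟩
    rw [him, Finset.card_image_of_injOn, Finset.card_range]
    have := Function.iterate_injOn_Iio_minimalPeriod (f := f) (x := x)
    rw [hper] at this
    intro a ha b hb hab
    exact this (by simpa using ha) (by simpa using hb) hab
  rw [Finset.card_eq_sum_card_fiberwise (f := O) (t := T.image O)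
    (fun x hx => Finset.mem_image_of_mem O hx)]
  have : ∀ b ∈ T.image O, (T.filter (fun y => O y = b)).card = m := by
    intro b hb
    obtain ⟨x, hx, rfl⟩ := Finset.mem_image.mp hb
    have : T.filter (fun y => O y = O x) = O x := by
      ext y
      simp only [Finset.mem_filter]
      constructor
      · rintro ⟨hyT, hOy⟩
        rw [← hOy]; exact hself y
      · intro hy
        exact ⟨hOsub x hx hy, hOmem x hx y hy⟩
    rw [this, hcardO x hx]
  rw [Finset.sum_congr rfl this, Finset.sum_const, smul_eq_mul]
  exact Dvd.intro_left _ rfl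



section Bridge
variable {r n : ℕ} [NeZero r]


lemma shiftPerm_apply (p : Fin n × ZMod r) : shiftPerm r n p = (p.1, 1 + p.2) := rfl

lemma etaPerm_apply (p : Fin n × ZMod r) : etaPerm r n p = (p.1, -p.2) := rfl

/-- the underlying `Fin n`-map of `π`. -/
def uf (π : Equiv.Perm (Fin n × ZMod r)) (i : Fin n) : Fin n := (π (i, 0)).1

/-- the color vector of `π`. -/
def zf (π : Equiv.Perm (Fin n × ZMod r)) (i : Fin n) : ZMod r := (π (i, 0)).2

variable {π : Equiv.Perm (Fin n × ZMod r)}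

lemma genSym_shift (hπ : π ∈ genSym r n) (p : Fin n × ZMod r) :
    π (p.1, 1 + p.2) = ((π p).1, 1 + (π p).2) := by
  have h := (Subgroup.mem_centralizer_iff.mp hπ) (shiftPerm r n) rfl
  have := congrFun (congrArg (fun (e : Equiv.Perm (Fin n × ZMod r)) => (e : _ → _)) h) p
  simp only [Equiv.Perm.coe_mul, Function.comp_apply] at this
  rw [shiftPerm_apply, shiftPerm_apply] at this
  exact this.symm.trans rfl

lemma genSym_apply (hπ : π ∈ genSym r n) (i : Fin n) (k : ZMod r) :
    π (i, k) = (uf π i, zf π i + k) := by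
  have key : ∀ (m : ℕ) (k : ZMod r), π (i, (m : ZMod r) + k) = ((π (i,k)).1, (m : ZMod r) + (π (i,k)).2) := by
    intro m
    induction m with
    | zero => intro k; simp
    | succ j ih =>
      intro k
      have : ((j+1 : ℕ) : ZMod r) + k = 1 + ((j : ZMod r) + k) := by push_cast; ring
      rw [this, genSym_shift hπ (i, (j : ZMod r) + k), ih k]
      push_cast
      ring_nf
  have hk : ((k.val : ℕ) : ZMod r) = k := ZMod.natCast_rightInverse k
  have := key k.val 0
  rw [add_zero, hk] at this
  rw [this, uf, zf, add_comm]

lemma uf_injective (hπ : π ∈ genSym r n) : Function.Injective (uf π) := by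
  intro i j hij
  have h1 : π (j, zf π i - zf π j) = (uf π j, zf π i) := by
    rw [genSym_apply hπ]; ring_nf
  have h2 : π (i, 0) = (uf π i, zf π i) := by rw [genSym_apply hπ, add_zero]
  have : π (i, 0) = π (j, zf π i - zf π j) := by rw [h1, h2, hij]
  have := π.injective this
  exact congrArg Prod.fst this

lemma barPerm_apply (hπ : π ∈ genSym r n) (i : Fin n) (k : ZMod r) :
    barPerm r n π (i, k) = (uf π i, k - zf π i) := by
  show (etaPerm r n * π * etaPerm r n) (i, k) = _
  rw [Equiv.Perm.mul_apply, Equiv.Perm.mul_apply, etaPerm_apply, genSym_apply hπ, etaPerm_apply]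
  simp
  ring

lemma absq_apply (hπ : π ∈ genSym r n) (i : Fin n) (k : ZMod r) :
    (π * barPerm r n π) (i, k) = (uf π (uf π i), (zf π (uf π i) - zf π i) + k) := by
  rw [Equiv.Perm.mul_apply, barPerm_apply hπ, genSym_apply hπ]
  ring_nf

lemma absq_pow_apply (hπ : π ∈ genSym r n) (m : ℕ) (i : Fin n) :
    ((π * barPerm r n π) ^ m) (i, 0) =
      ((uf π ∘ uf π)^[m] i,
        ∑ j ∈ Finset.range m, (zf π (uf π ((uf π ∘ uf π)^[j] i)) - zf π ((uf π ∘ uf π)^[j] i))) := by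
  induction m with
  | zero => simp
  | succ m ih =>
    rw [pow_succ', Equiv.Perm.mul_apply, ih, absq_apply hπ, Function.iterate_succ_apply',
      Finset.sum_range_succ]
    simp only [Function.comp_apply]
    rw [Prod.mk.injEq]
    exact ⟨rfl, by ring⟩

lemma cycLen_eq (hπ : π ∈ genSym r n) (i : Fin n) :
    cycLen r n (π * barPerm r n π) i = alen (uf π) i := by
  unfold cycLen alen
  congr 1
  funext j
  rw [absq_apply hπ]
  rfl

lemma cycColor_eq (hπ : π ∈ genSym r n) (i : Fin n) :
    cycColor r n (π * barPerm r n π) i = acol (uf π) (zf π) i := by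
  unfold cycColor
  rw [cycLen_eq hπ, absq_pow_apply hπ]
  rfl

lemma isGrnCycleType_iff_absCount (hπ : π ∈ genSym r n) (Λ : ZMod r → Multiset ℕ) :
    IsGrnCycleType r n (π * barPerm r n π) Λ ↔ AbsCount (uf π) (zf π) Λ := by
  unfold IsGrnCycleType AbsCount
  constructor <;> intro h t d hd <;> rw [h t d hd] <;>
    exact Nat.card_congr (Equiv.subtypeEquivRight fun i => by rw [cycLen_eq hπ, cycColor_eq hπ])

/-- build an element of `genSym` from a permutation and a coloring. -/
def mkPerm (σ : Equiv.Perm (Fin n)) (z : Fin n → ZMod r) : Equiv.Perm (Fin n × ZMod r) where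
  toFun p := (σ p.1, z p.1 + p.2)
  invFun p := (σ.symm p.1, p.2 - z (σ.symm p.1))
  left_inv p := by simp
  right_inv p := by simp

lemma mkPerm_mem (σ : Equiv.Perm (Fin n)) (z : Fin n → ZMod r) : mkPerm σ z ∈ genSym r n := by
  rw [genSym, Subgroup.mem_centralizer_iff]
  rintro g rfl
  ext p
  · rfl
  · show (1 : ZMod r) + (z p.1 + p.2) = z p.1 + (1 + p.2)
    ring

lemma uf_mkPerm (σ : Equiv.Perm (Fin n)) (z : Fin n → ZMod r) : uf (mkPerm σ z) = σ := by
  funext i; rfl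

lemma zf_mkPerm (σ : Equiv.Perm (Fin n)) (z : Fin n → ZMod r) : zf (mkPerm σ z) = z := by
  funext i
  show z i + 0 = z i
  rw [add_zero]


end Bridge
end GrnAux


namespace GrnAux

section ForwardAux

variable {r : ℕ} {α : Type*} [Fintype α] {s : α → α} (hs : Function.Bijective s)
  {z : α → ZMod r} {Λ : ZMod r → Multiset ℕ}

lemma comp_self_eq_iterate_two (s : α → α) : s ∘ s = s^[2] := by
  funext y
  rw [Function.iterate_succ_apply', Function.iterate_one]
  rfl

include hs

lemma alen_eq_div_gcd (x : α) :
    alen s x = Function.minimalPeriod s x / Nat.gcd (Function.minimalPeriod s x) 2 := by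
  rw [alen, comp_self_eq_iterate_two, Function.minimalPeriod_iterate_eq_div_gcd two_ne_zero]

lemma minimalPeriod_s_pos (x : α) : 0 < Function.minimalPeriod s x :=
  Function.minimalPeriod_pos_of_mem_periodicPts (periodic_of_bij hs x)

lemma minimalPeriod_eq_two_mul (x : α) {d : ℕ} (hd : 0 < d)
    (hlen : alen s x = d) (hnotodd : ¬ Odd (Function.minimalPeriod s x)) :
    Function.minimalPeriod s x = 2 * d := by
  have h1 := alen_eq_div_gcd hs x
  have h2 := minimalPeriod_s_pos hs x
  have heven : 2 ∣ Function.minimalPeriod s x := by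
    rwa [Nat.odd_iff, ← Nat.two_dvd_ne_zero, not_not] at hnotodd
  have hgcd : Nat.gcd (Function.minimalPeriod s x) 2 = 2 :=
    Nat.gcd_eq_right heven
  rw [hgcd] at h1
  omega

lemma count_even_of_selfneg (h : AbsCount s z Λ)
    (t : ZMod r) (d : ℕ) (hd : 0 < d)
    (hodd_excl : ∀ x : α, alen s x = d → acol s z x = t →
      ¬ Odd (Function.minimalPeriod s x))
    (ht : -t = t) : Even ((Λ t).count d) := by
  classical
  have hcard : Nat.card {x : α // alen s x = d ∧ acol s z x = t}
      = (Finset.univ.filter (fun x => alen s x = d ∧ acol s z x = t)).card := by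
    rw [Nat.card_eq_fintype_card, Fintype.card_subtype]
  set T := Finset.univ.filter (fun x => alen s x = d ∧ acol s z x = t) with hT
  have hdvd : 2 * d ∣ T.card := by
    refine orbit_card_dvd s T (2 * d) (by omega) ?_ ?_
    · intro x hx
      rw [hT, Finset.mem_filter] at hx
      exact minimalPeriod_eq_two_mul hs x hd hx.2.1 (hodd_excl x hx.2.1 hx.2.2)
    · intro x hx
      rw [hT, Finset.mem_filter] at hx ⊢
      refine ⟨Finset.mem_univ _, ?_, ?_⟩
      · rw [alen_apply hs, hx.2.1]
      · rw [acol_apply hs, hx.2.2, ht]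
  obtain ⟨k, hk⟩ := hdvd
  have hcount : d * (Λ t).count d = T.card := by rw [h t d hd, hcard]
  have : d * (Λ t).count d = d * (2 * k) := by rw [hcount, hk]; ring
  have := Nat.eq_of_mul_eq_mul_left hd this
  exact ⟨k, by omega⟩

lemma lambda_neg_eq (h : AbsCount s z Λ) (hpos : ∀ t, 0 ∉ Λ t) (t : ZMod r) :
    Λ t = Λ (-t) := by
  classical
  ext d
  rcases Nat.eq_zero_or_pos d with rfl | hd
  · rw [Multiset.count_eq_zero_of_notMem (hpos t), Multiset.count_eq_zero_of_notMem (hpos (-t))]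
  · have h1 := h t d hd
    have h2 := h (-t) d hd
    have hcardeq : Nat.card {x : α // alen s x = d ∧ acol s z x = t}
        = Nat.card {x : α // alen s x = d ∧ acol s z x = (-t)} := by
      refine Nat.card_congr (Equiv.subtypeEquiv (Equiv.ofBijective s hs) fun x => ?_)
      rw [show (Equiv.ofBijective s hs) x = s x from rfl, alen_apply hs, acol_apply hs,
        neg_inj]
    rw [hcardeq, ← h2] at h1
    exact Nat.eq_of_mul_eq_mul_left hd h1

end ForwardAux

section Forward

variable {r n : ℕ} [NeZero r] {Λ : ZMod r → Multiset ℕ}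

lemma forward_direction (hex : ∃ π : Equiv.Perm (Fin n × ZMod r), π ∈ genSym r n ∧
      IsGrnCycleType r n (π * barPerm r n π) Λ) (hpos : ∀ t, 0 ∉ Λ t) :
    ((∀ i : ℕ, Even ((Λ 0).count (2 * i))) ∧
       (∀ t : ℕ, 1 ≤ t → 2 * t < r → Λ (t : ZMod r) = Λ (((r - t : ℕ) : ZMod r))) ∧
       (Even r → ∀ p : ℕ, Even ((Λ (((r / 2 : ℕ) : ZMod r))).count p))) := by
  obtain ⟨π, hπ, hct⟩ := hex
  have habs : AbsCount (uf π) (zf π) Λ := (isGrnCycleType_iff_absCount hπ Λ).mp hct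
  have hr : 0 < r := NeZero.pos r
  have hs : Function.Bijective (uf π) :=
    Finite.injective_iff_bijective.mp (uf_injective hπ)
  refine ⟨?_, ?_, ?_⟩
  · -- even parts of Λ 0 have even multiplicity
    intro i
    rcases Nat.eq_zero_or_pos i with rfl | hi
    · simp only [Nat.mul_zero]
      rw [Multiset.count_eq_zero_of_notMem (hpos 0)]
      exact Even.zero
    · refine count_even_of_selfneg hs habs 0 (2 * i) (by omega) ?_ neg_zero
      intro x hlen _ hodd
      have := alen_eq_div_gcd hs x
      have hgcd : Nat.gcd (Function.minimalPeriod (uf π) x) 2 = 1 := by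
        exact Nat.coprime_two_right.mpr hodd
      rw [hgcd, Nat.div_one] at this
      obtain ⟨k, hk⟩ := hodd
      omega
  · -- symmetry
    intro t h1t h2t
    have hcast : ((r - t : ℕ) : ZMod r) = -(t : ZMod r) := by
      have : ((r - t : ℕ) : ZMod r) = (r : ZMod r) - (t : ZMod r) := by
        rw [Nat.cast_sub (by omega)]
      rw [this, ZMod.natCast_self, zero_sub]
    rw [hcast]
    exact lambda_neg_eq hs habs hpos _
  · -- middle color
    intro hevenr p
    rcases Nat.eq_zero_or_pos p with rfl | hp
    · rw [Multiset.count_eq_zero_of_notMem (hpos _)]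
      exact Even.zero
    · have hhalf_ne : ((r / 2 : ℕ) : ZMod r) ≠ 0 := by
        rw [Ne, ZMod.natCast_eq_zero_iff]
        intro hdvd
        obtain ⟨k, hk⟩ := hevenr
        have h2 : r / 2 = k := by omega
        rcases Nat.eq_zero_or_pos k with rfl | hkpos
        · omega
        · have := Nat.le_of_dvd (by omega) hdvd
          omega
      have hneg : -((r / 2 : ℕ) : ZMod r) = ((r / 2 : ℕ) : ZMod r) := by
        have hsum : ((r / 2 : ℕ) : ZMod r) + ((r / 2 : ℕ) : ZMod r) = 0 := by
          rw [← Nat.cast_add]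
          obtain ⟨k, hk⟩ := hevenr
          rw [show r / 2 + r / 2 = r by omega, ZMod.natCast_self]
        linear_combination -hsum
      refine count_even_of_selfneg hs habs _ p hp ?_ hneg
      intro x _ hcol hodd
      exact hhalf_ne (hcol ▸ acol_of_odd hs hodd)
  
end Forward

end GrnAux


namespace GrnAux

section Backward

variable {r : ℕ} [NeZero r]

/-- realizability of a cycle type by an abstract pair `(s, z)`. -/
def Rlz (r : ℕ) (Λ : ZMod r → Multiset ℕ) : Prop :=
  ∃ (α : Type) (_ : Fintype α) (s : α → α) (z : α → ZMod r),
    Function.Bijective s ∧ AbsCount s z Λ ∧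
    Nat.card α = ∑ t ∈ Finset.range r, (Λ (t : ZMod r)).sum

lemma rlz_zero : Rlz r (fun _ => 0) := by
  refine ⟨PEmpty, inferInstance, id, fun _ => 0, Function.bijective_id, ?_, ?_⟩
  · intro t d hd
    have : IsEmpty {x : PEmpty // alen id x = d ∧ acol id (fun _ => 0) x = t} :=
      ⟨fun ⟨x, _⟩ => x.elim⟩
    rw [Nat.card_of_isEmpty]
    simp
  · simp [Nat.card_eq_fintype_card]

lemma rlz_add {Λ₁ Λ₂ : ZMod r → Multiset ℕ} (h1 : Rlz r Λ₁) (h2 : Rlz r Λ₂) :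
    Rlz r (fun t => Λ₁ t + Λ₂ t) := by
  obtain ⟨α₁, f1, s₁, z₁, hb1, ha1, hc1⟩ := h1
  obtain ⟨α₂, f2, s₂, z₂, hb2, ha2, hc2⟩ := h2
  refine ⟨α₁ ⊕ α₂, inferInstance, Sum.map s₁ s₂, Sum.elim z₁ z₂,
    (Sum.map_bijective).mpr ⟨hb1, hb2⟩, ?_, ?_⟩
  · intro t d hd
    have e1 : ∀ a : α₁, (alen (Sum.map s₁ s₂) (Sum.inl a) = d ∧
        acol (Sum.map s₁ s₂) (Sum.elim z₁ z₂) (Sum.inl a) = t) ↔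
        (alen s₁ a = d ∧ acol s₁ z₁ a = t) := by
      intro a
      rw [alen_comp Sum.inl_injective (fun x => rfl),
        acol_comp Sum.inl_injective (fun x => rfl) (fun x => rfl)]
      exact Iff.rfl
    have e2 : ∀ a : α₂, (alen (Sum.map s₁ s₂) (Sum.inr a) = d ∧
        acol (Sum.map s₁ s₂) (Sum.elim z₁ z₂) (Sum.inr a) = t) ↔
        (alen s₂ a = d ∧ acol s₂ z₂ a = t) := by
      intro a
      rw [alen_comp Sum.inr_injective (fun x => rfl),
        acol_comp Sum.inr_injective (fun x => rfl) (fun x => rfl)]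
      exact Iff.rfl
    have : Nat.card {x : α₁ ⊕ α₂ // alen (Sum.map s₁ s₂) x = d ∧
        acol (Sum.map s₁ s₂) (Sum.elim z₁ z₂) x = t}
        = Nat.card {a : α₁ // alen s₁ a = d ∧ acol s₁ z₁ a = t}
          + Nat.card {a : α₂ // alen s₂ a = d ∧ acol s₂ z₂ a = t} := by
      rw [Nat.card_congr (Equiv.subtypeSum), Nat.card_sum]
      congr 1
      · exact Nat.card_congr (Equiv.subtypeEquivRight e1)
      · exact Nat.card_congr (Equiv.subtypeEquivRight e2)
    rw [this, Multiset.count_add, Nat.mul_add, ha1 t d hd, ha2 t d hd]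
  · rw [Nat.card_sum, hc1, hc2, ← Finset.sum_add_distrib]
    congr 1
    funext t
    rw [Multiset.sum_add]

lemma sum_indicator_nat (c : ZMod r) (v : ℕ) :
    ∑ t ∈ Finset.range r, (if (t : ZMod r) = c then v else 0) = v := by
  have hr : 0 < r := NeZero.pos r
  rw [Finset.sum_eq_single_of_mem c.val (Finset.mem_range.mpr (ZMod.val_lt c))]
  · rw [if_pos (ZMod.natCast_rightInverse c)]
  · intro t ht hne
    rw [if_neg]
    intro hc
    apply hne
    have := congrArg ZMod.val hc
    rwa [ZMod.val_natCast_of_lt (Finset.mem_range.mp ht)] at this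

lemma sum_indicator_multiset (c : ZMod r) (M : Multiset ℕ) :
    ∑ t ∈ Finset.range r, ((if (t : ZMod r) = c then M else 0)).sum = M.sum := by
  have : ∀ t : ℕ, ((if (t : ZMod r) = c then M else 0)).sum
      = (if (t : ZMod r) = c then M.sum else 0) := by
    intro t; split_ifs <;> simp
  rw [Finset.sum_congr rfl (fun t _ => this t), sum_indicator_nat]

lemma cast_eq_iff_of_lt {a b : ℕ} (ha : a < r) (hb : b < r) :
    ((a : ZMod r) = (b : ZMod r)) ↔ a = b := by
  constructor
  · intro h
    have := congrArg ZMod.val h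
    rwa [ZMod.val_natCast_of_lt ha, ZMod.val_natCast_of_lt hb] at this
  · rintro rfl; rfl

lemma cast_ne_zero_of_lt {t : ℕ} (h1 : 1 ≤ t) (h2 : t < r) : (t : ZMod r) ≠ 0 := by
  have := cast_eq_iff_of_lt (r := r) h2 (NeZero.pos r)
  rw [Nat.cast_zero] at this
  intro h
  exact absurd (this.mp h) (by omega)

end Backward
end GrnAux


namespace GrnAux

section Atoms

variable {r : ℕ} [NeZero r]

lemma iter_one_add {m : ℕ} (k : ℕ) (x : ZMod m) :
    (fun y : ZMod m => 1 + y)^[k] x = (k : ZMod m) + x := by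
  induction k with
  | zero => simp
  | succ j ih => rw [Function.iterate_succ_apply', ih]; push_cast; ring

lemma one_add_bijective {m : ℕ} : Function.Bijective (fun y : ZMod m => 1 + y) :=
  ⟨fun a b h => by simpa using h, fun y => ⟨y - 1, by ring⟩⟩

lemma mp_one_add {m : ℕ} [NeZero m] (x : ZMod m) :
    Function.minimalPeriod (fun y : ZMod m => 1 + y) x = m := by
  have hper : Function.IsPeriodicPt (fun y : ZMod m => 1 + y) m x := by
    show (fun y : ZMod m => 1 + y)^[m] x = x
    rw [iter_one_add, ZMod.natCast_self, zero_add]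
  have hdvd1 : Function.minimalPeriod (fun y : ZMod m => 1 + y) x ∣ m :=
    Function.IsPeriodicPt.minimalPeriod_dvd hper
  have hdvd2 : m ∣ Function.minimalPeriod (fun y : ZMod m => 1 + y) x := by
    have h := Function.iterate_minimalPeriod
      (f := fun y : ZMod m => 1 + y) (x := x)
    rw [iter_one_add] at h
    have : ((Function.minimalPeriod (fun y : ZMod m => 1 + y) x : ℕ) : ZMod m) = 0 := by
      have h2 : (↑(Function.minimalPeriod (fun y : ZMod m => 1 + y) x) : ZMod m) + x
          = 0 + x := by rw [zero_add]; exact h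
      exact add_right_cancel h2
    rwa [ZMod.natCast_eq_zero_iff] at this
  exact Nat.dvd_antisymm hdvd1 hdvd2

lemma alen_one_add {m : ℕ} [NeZero m] (x : ZMod m) :
    alen (fun y : ZMod m => 1 + y) x = m / Nat.gcd m 2 := by
  rw [alen_eq_div_gcd one_add_bijective, mp_one_add]

lemma alen_one_add_odd {m : ℕ} [NeZero m] (hodd : Odd m) (x : ZMod m) :
    alen (fun y : ZMod m => 1 + y) x = m := by
  rw [alen_one_add, Nat.coprime_two_right.mpr hodd, Nat.div_one]

lemma alen_one_add_even {d : ℕ} (hd : 0 < d) [NeZero (2 * d)] (x : ZMod (2 * d)) :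
    alen (fun y : ZMod (2 * d) => 1 + y) x = d := by
  rw [alen_one_add, Nat.gcd_eq_right ⟨d, rfl⟩, Nat.mul_div_cancel_left d (by omega)]

/-- realization of a single odd cycle of color 0. -/
lemma rlz_odd (ℓ : ℕ) (hodd : Odd ℓ) : Rlz r (fun t => if t = 0 then {ℓ} else 0) := by
  have hℓ : 0 < ℓ := hodd.pos
  haveI : NeZero ℓ := ⟨by omega⟩
  refine ⟨ZMod ℓ, inferInstance, fun y => 1 + y, fun _ => 0, one_add_bijective, ?_, ?_⟩
  · intro t d hd
    have hlen : ∀ x : ZMod ℓ, alen (fun y : ZMod ℓ => 1 + y) x = ℓ := alen_one_add_odd hodd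
    have hcol : ∀ x : ZMod ℓ, acol (fun y : ZMod ℓ => 1 + y) (fun _ => (0 : ZMod r)) x = 0 := by
      intro x
      unfold acol
      simp
    by_cases hcase : d = ℓ ∧ t = 0
    · obtain ⟨rfl, rfl⟩ := hcase
      have : Nat.card {x : ZMod d // alen (fun y : ZMod d => 1 + y) x = d ∧
          acol (fun y : ZMod d => 1 + y) (fun _ => (0 : ZMod r)) x = 0} = d := by
        rw [Nat.card_congr (Equiv.subtypeUnivEquiv (fun x => ⟨hlen x, hcol x⟩)),
          Nat.card_eq_fintype_card, ZMod.card]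
      rw [this]
      simp
    · have hempty : IsEmpty {x : ZMod ℓ // alen (fun y : ZMod ℓ => 1 + y) x = d ∧
          acol (fun y : ZMod ℓ => 1 + y) (fun _ => (0 : ZMod r)) x = t} := by
        refine ⟨fun ⟨x, hx1, hx2⟩ => hcase ⟨?_, ?_⟩⟩
        · rw [← hx1, hlen x]
        · rw [← hx2, hcol x]
      rw [Nat.card_of_isEmpty]
      rcases eq_or_ne t 0 with rfl | ht
      · have hdℓ : d ≠ ℓ := fun h => hcase ⟨h, rfl⟩
        simp [Multiset.count_singleton, hdℓ]
      · simp [ht]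
  · rw [sum_indicator_multiset, Multiset.sum_singleton, Nat.card_eq_fintype_card, ZMod.card]

end Atoms
end GrnAux


namespace GrnAux

section PairAtom

variable {r : ℕ} [NeZero r]

lemma comp_self_iterate {α : Type*} (s : α → α) (m : ℕ) (y : α) :
    (s ∘ s)^[m] y = s^[2*m] y := by
  induction m generalizing y with
  | zero => simp
  | succ k ih =>
    rw [Function.iterate_succ_apply', ih, show 2*(k+1) = 2*k + 1 + 1 by ring,
      Function.iterate_succ_apply', Function.iterate_succ_apply']
    rfl

lemma zsum {d : ℕ} (hd : 0 < d) (e : ZMod r) (x : ZMod (2*d)) (b : ℕ) (hb : b < 2) :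
    (∑ j ∈ Finset.range d, if ((2*j+b : ℕ) : ZMod (2*d)) + x = 0 then e else 0)
      = if (x.val + b) % 2 = 0 then e else 0 := by
  haveI : NeZero (2*d) := ⟨by omega⟩
  have hv : x.val < 2*d := ZMod.val_lt x
  have hxx : ((x.val : ℕ) : ZMod (2*d)) = x := ZMod.natCast_rightInverse x
  have hcond : ∀ j : ℕ, (((2*j+b : ℕ) : ZMod (2*d)) + x = 0) ↔ (2*d) ∣ (2*j + b + x.val) := by
    intro j
    have key : ((2*j+b+x.val : ℕ) : ZMod (2*d)) = ((2*j+b : ℕ) : ZMod (2*d)) + x := by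
      rw [Nat.cast_add, hxx]
    rw [← key, ZMod.natCast_eq_zero_iff]
  simp only [hcond]
  rw [← Finset.sum_filter]
  by_cases hpar : (x.val + b) % 2 = 0
  · have hfil : Finset.filter (fun j => (2*d) ∣ (2*j + b + x.val)) (Finset.range d)
        = {if x.val + b = 0 then 0 else d - (x.val + b)/2} := by
      ext j
      simp only [Finset.mem_filter, Finset.mem_range, Finset.mem_singleton]
      constructor
      · rintro ⟨hj, k, hk⟩
        have hk2 : k < 2 := by
          by_contra hge
          push_neg at hge
          have : 2*d*2 ≤ 2*d*k := Nat.mul_le_mul_left _ hge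
          omega
        interval_cases k <;> split_ifs <;> omega
      · intro hj
        have hjlt : j < d := by split_ifs at hj <;> omega
        refine ⟨hjlt, ⟨if x.val + b = 0 then 0 else 1, ?_⟩⟩
        split_ifs at hj ⊢ <;> omega
    rw [hfil, Finset.sum_singleton, if_pos hpar]
  · have hfil : Finset.filter (fun j => (2*d) ∣ (2*j + b + x.val)) (Finset.range d)
        = ∅ := by
      refine Finset.eq_empty_iff_forall_notMem.mpr fun j hj => ?_
      rw [Finset.mem_filter, Finset.mem_range] at hj
      obtain ⟨hjd, k, hk⟩ := hj
      have hk2 : k < 2 := by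
        by_contra hge
        push_neg at hge
        have : 2*d*2 ≤ 2*d*k := Nat.mul_le_mul_left _ hge
        omega
      interval_cases k <;> omega
    rw [hfil, Finset.sum_empty, if_neg hpar]

lemma acol_pair {d : ℕ} (hd : 0 < d) [NeZero (2*d)] (c : ZMod r) (x : ZMod (2*d)) :
    acol (fun y : ZMod (2*d) => 1 + y) (fun y => if y = 0 then -c else 0) x
      = if Even x.val then c else -c := by
  unfold acol
  rw [alen_one_add_even hd]
  have h1 : ∀ j : ℕ, ((fun y : ZMod (2*d) => 1+y) ∘ (fun y => 1+y))^[j] x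
      = ((2*j+0 : ℕ) : ZMod (2*d)) + x := by
    intro j
    rw [comp_self_iterate, iter_one_add, Nat.add_zero]
  have h2 : ∀ j : ℕ, (fun y : ZMod (2*d) => 1+y) (((fun y : ZMod (2*d) => 1+y) ∘ (fun y => 1+y))^[j] x)
      = ((2*j+1 : ℕ) : ZMod (2*d)) + x := by
    intro j
    rw [h1 j]
    push_cast
    ring
  have hterm : ∀ j ∈ Finset.range d,
      ((fun y : ZMod (2*d) => if y = 0 then -c else 0)
          ((fun y : ZMod (2*d) => 1+y) (((fun y : ZMod (2*d) => 1+y) ∘ (fun y => 1+y))^[j] x))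
        - (fun y : ZMod (2*d) => if y = 0 then -c else 0)
          (((fun y : ZMod (2*d) => 1+y) ∘ (fun y => 1+y))^[j] x))
      = ((if ((2*j+1 : ℕ) : ZMod (2*d)) + x = 0 then -c else 0)
          - (if ((2*j+0 : ℕ) : ZMod (2*d)) + x = 0 then -c else 0)) := by
    intro j _
    rw [h2 j, h1 j]
  rw [Finset.sum_congr rfl hterm, Finset.sum_sub_distrib,
    zsum hd (-c) x 1 (by omega), zsum hd (-c) x 0 (by omega)]
  rcases Nat.even_or_odd x.val with he | ho
  · have e0 : (x.val + 0) % 2 = 0 := by rw [Nat.even_iff] at he; omega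
    have e1 : ¬ ((x.val + 1) % 2 = 0) := by rw [Nat.even_iff] at he; omega
    rw [if_neg e1, if_pos e0, if_pos he]
    ring
  · have e0 : ¬ ((x.val + 0) % 2 = 0) := by rw [Nat.odd_iff] at ho; omega
    have e1 : (x.val + 1) % 2 = 0 := by rw [Nat.odd_iff] at ho; omega
    rw [if_pos e1, if_neg e0, if_neg (Nat.not_even_iff_odd.mpr ho)]
    ring

lemma card_even_val {d : ℕ} (hd : 0 < d) [NeZero (2*d)] :
    (Finset.univ.filter (fun x : ZMod (2*d) => Even x.val)).card = d := by
  have him : Finset.univ.filter (fun x : ZMod (2*d) => Even x.val)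
      = (Finset.range d).image (fun j => ((2*j : ℕ) : ZMod (2*d))) := by
    ext x
    simp only [Finset.mem_filter, Finset.mem_univ, true_and, Finset.mem_image, Finset.mem_range]
    constructor
    · intro hx
      obtain ⟨k, hk⟩ := hx
      have hvlt := ZMod.val_lt x
      refine ⟨k, by omega, ?_⟩
      rw [show 2*k = x.val by omega]
      exact ZMod.natCast_rightInverse x
    · rintro ⟨j, hj, rfl⟩
      rw [ZMod.val_natCast_of_lt (by omega)]
      exact ⟨j, by ring⟩
  rw [him, Finset.card_image_of_injOn, Finset.card_range]
  intro a ha b hb hab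
  simp only [Finset.coe_range, Set.mem_Iio] at ha hb
  have := congrArg ZMod.val hab
  rw [ZMod.val_natCast_of_lt (by omega), ZMod.val_natCast_of_lt (by omega)] at this
  omega

lemma card_odd_val {d : ℕ} (hd : 0 < d) [NeZero (2*d)] :
    (Finset.univ.filter (fun x : ZMod (2*d) => ¬ Even x.val)).card = d := by
  classical
  have h := Finset.card_filter_add_card_filter_not
    (s := (Finset.univ : Finset (ZMod (2*d)))) (p := fun x => Even x.val)
  rw [Finset.card_univ, ZMod.card, card_even_val hd] at h
  omega

lemma rlz_pair (d : ℕ) (hd : 0 < d) (c : ZMod r) :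
    Rlz r (fun t => (if t = c then ({d} : Multiset ℕ) else 0)
      + (if t = -c then ({d} : Multiset ℕ) else 0)) := by
  classical
  haveI : NeZero (2*d) := ⟨by omega⟩
  refine ⟨ZMod (2*d), inferInstance, fun y => 1 + y,
    fun y => if y = 0 then -c else 0, one_add_bijective, ?_, ?_⟩
  · intro t d' hd'
    have hcnt : ((if t = c then ({d} : Multiset ℕ) else 0)
        + (if t = -c then ({d} : Multiset ℕ) else 0)).count d'
        = (if d' = d then ((if t = c then 1 else 0) + (if t = -c then 1 else 0)) else 0) := by
      rw [Multiset.count_add]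
      split_ifs with h1 h2 h3 h2 h3 h3 <;>
        simp_all [Multiset.count_singleton]
    rw [hcnt]
    by_cases hdd : d' = d
    · subst hdd
      have hiff : ∀ x : ZMod (2*d'),
          (alen (fun y : ZMod (2*d') => 1+y) x = d' ∧
            acol (fun y : ZMod (2*d') => 1+y) (fun y => if y = 0 then -c else 0) x = t)
          ↔ ((if Even x.val then c else -c) = t) := by
        intro x
        rw [alen_one_add_even hd, acol_pair hd c x]
        simp
      have hcard : Nat.card {x : ZMod (2*d') // alen (fun y : ZMod (2*d') => 1+y) x = d' ∧
          acol (fun y : ZMod (2*d') => 1+y) (fun y => if y = 0 then -c else 0) x = t}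
          = (if t = c then d' else 0) + (if t = -c then d' else 0) := by
        rw [Nat.card_eq_fintype_card, Fintype.card_subtype,
          Finset.filter_congr (fun x _ => hiff x)]
        by_cases h1 : t = c <;> by_cases h2 : t = -c
        · have : Finset.filter (fun x : ZMod (2*d') => (if Even x.val then c else -c) = t)
              Finset.univ = Finset.univ := by
            refine Finset.filter_true_of_mem fun x _ => ?_
            split_ifs
            · exact h1.symm
            · exact h2.symm
          rw [this, Finset.card_univ, ZMod.card, if_pos h1, if_pos h2]
          ring
        · have : Finset.filter (fun x : ZMod (2*d') => (if Even x.val then c else -c) = t)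
              Finset.univ = Finset.univ.filter (fun x : ZMod (2*d') => Even x.val) := by
            refine Finset.filter_congr fun x _ => ?_
            split_ifs with he
            · simp [h1.symm, he]
            · simp only [iff_false, he]
              exact fun hc => h2 hc.symm
          rw [this, card_even_val hd, if_pos h1, if_neg h2, Nat.add_zero]
        · have : Finset.filter (fun x : ZMod (2*d') => (if Even x.val then c else -c) = t)
              Finset.univ = Finset.univ.filter (fun x : ZMod (2*d') => ¬ Even x.val) := by
            refine Finset.filter_congr fun x _ => ?_
            split_ifs with he
            · simp only [iff_false, he, not_true]
              exact fun hc => h1 hc.symm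
            · simp [h2.symm, he]
          rw [this, card_odd_val hd, if_neg h1, if_pos h2, Nat.zero_add]
        · have : Finset.filter (fun x : ZMod (2*d') => (if Even x.val then c else -c) = t)
              Finset.univ = ∅ := by
            refine Finset.filter_false_of_mem fun x _ => ?_
            split_ifs
            · exact fun hc => h1 hc.symm
            · exact fun hc => h2 hc.symm
          rw [this, Finset.card_empty, if_neg h1, if_neg h2]
      rw [hcard, if_pos rfl]
      split_ifs <;> ring
    · have hempty : IsEmpty {x : ZMod (2*d) // alen (fun y : ZMod (2*d) => 1+y) x = d' ∧
          acol (fun y : ZMod (2*d) => 1+y) (fun y => if y = 0 then -c else 0) x = t} := by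
        refine ⟨fun ⟨x, hx1, _⟩ => hdd ?_⟩
        rw [← hx1, alen_one_add_even hd]
      rw [Nat.card_of_isEmpty, if_neg hdd, Nat.mul_zero]
  · have hsum : ∀ t : ℕ, ((if ((t : ℕ) : ZMod r) = c then ({d} : Multiset ℕ) else 0)
        + (if ((t : ℕ) : ZMod r) = -c then ({d} : Multiset ℕ) else 0)).sum
        = (if ((t : ℕ) : ZMod r) = c then d else 0) + (if ((t : ℕ) : ZMod r) = -c then d else 0) := by
      intro t
      rw [Multiset.sum_add]
      congr 1 <;> split_ifs <;> simp
    rw [Finset.sum_congr rfl (fun t _ => hsum t), Finset.sum_add_distrib,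
      sum_indicator_nat, sum_indicator_nat, Nat.card_eq_fintype_card, ZMod.card]
    ring

end PairAtom
end GrnAux


namespace GrnAux

section Induction

variable {r : ℕ} [NeZero r]

lemma erase_add_singleton {M : Multiset ℕ} {a : ℕ} (h : a ∈ M) : M.erase a + {a} = M := by
  rw [add_comm, Multiset.singleton_add, Multiset.cons_erase h]

lemma erase_erase_add {M : Multiset ℕ} {a : ℕ} (h1 : a ∈ M) (h2 : a ∈ M.erase a) :
    (M.erase a).erase a + ({a} + {a}) = M := by
  rw [← add_assoc, erase_add_singleton h2, erase_add_singleton h1]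

lemma sizes_split {Λ Λ' A : ZMod r → Multiset ℕ} (hsplit : Λ = fun t => Λ' t + A t) :
    ∑ t ∈ Finset.range r, (Λ (t : ZMod r)).sum
      = ∑ t ∈ Finset.range r, (Λ' (t : ZMod r)).sum
        + ∑ t ∈ Finset.range r, (A (t : ZMod r)).sum := by
  subst hsplit
  rw [← Finset.sum_add_distrib]
  exact Finset.sum_congr rfl fun t _ => Multiset.sum_add _ _

lemma pair_sizes (d : ℕ) (c : ZMod r) :
    ∑ t ∈ Finset.range r, (((if ((t:ℕ) : ZMod r) = c then ({d} : Multiset ℕ) else 0)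
      + (if ((t:ℕ) : ZMod r) = -c then ({d} : Multiset ℕ) else 0)).sum) = d + d := by
  have hsum : ∀ t : ℕ, ((if ((t : ℕ) : ZMod r) = c then ({d} : Multiset ℕ) else 0)
      + (if ((t : ℕ) : ZMod r) = -c then ({d} : Multiset ℕ) else 0)).sum
      = (if ((t : ℕ) : ZMod r) = c then d else 0) + (if ((t : ℕ) : ZMod r) = -c then d else 0) := by
    intro t
    rw [Multiset.sum_add]
    congr 1 <;> split_ifs <;> simp
  rw [Finset.sum_congr rfl (fun t _ => hsum t), Finset.sum_add_distrib,
    sum_indicator_nat, sum_indicator_nat]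

lemma odd_sizes (ℓ : ℕ) :
    ∑ t ∈ Finset.range r, ((if ((t:ℕ) : ZMod r) = 0 then ({ℓ} : Multiset ℕ) else 0)).sum = ℓ := by
  rw [sum_indicator_multiset, Multiset.sum_singleton]

lemma rlz_of_conditions :
    ∀ (N : ℕ) (Λ : ZMod r → Multiset ℕ),
      (∑ t ∈ Finset.range r, (Λ (t : ZMod r)).sum = N) →
      (∀ t, 0 ∉ Λ t) →
      (∀ i : ℕ, Even ((Λ 0).count (2 * i))) →
      (∀ t : ℕ, 1 ≤ t → 2 * t < r → Λ (t : ZMod r) = Λ (((r - t : ℕ) : ZMod r))) →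
      (Even r → ∀ p : ℕ, Even ((Λ (((r / 2 : ℕ) : ZMod r))).count p)) →
      Rlz r Λ := by
  have hrpos : 0 < r := NeZero.pos r
  intro N
  induction N using Nat.strong_induction_on with
  | _ N ih =>
  intro Λ hN hpos h1 h2 h3
  by_cases hall : ∀ t : ZMod r, Λ t = 0
  · have hΛ : Λ = fun _ => 0 := funext hall
    rw [hΛ]
    exact rlz_zero
  · push_neg at hall
    obtain ⟨t₀, ht₀⟩ := hall
    obtain ⟨d, hd⟩ := Multiset.exists_mem_of_ne_zero ht₀
    have hdpos : 0 < d := Nat.pos_of_ne_zero (fun h => hpos t₀ (h ▸ hd))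
    have hvr : t₀.val < r := ZMod.val_lt t₀
    have hvc : ((t₀.val : ℕ) : ZMod r) = t₀ := ZMod.natCast_rightInverse t₀
    by_cases hB : t₀ = 0
    · -- color 0
      subst hB
      have hd0 : d ∈ Λ 0 := hd
      by_cases hdo : Odd d
      · -- odd part of Λ 0
        set Λ' : ZMod r → Multiset ℕ := fun t => if t = 0 then (Λ 0).erase d else Λ t
          with hΛ'def
        have hsplit : Λ = fun t => Λ' t + (if t = 0 then ({d} : Multiset ℕ) else 0) := by
          funext t
          by_cases ht : t = 0
          · subst ht
            rw [hΛ'def]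
            beta_reduce
            rw [if_pos rfl, if_pos rfl, erase_add_singleton hd0]
          · simp [hΛ'def, ht]
        have hsz := sizes_split hsplit
        rw [hN, odd_sizes d] at hsz
        have hpos' : ∀ t, 0 ∉ Λ' t := by
          intro t
          simp only [hΛ'def]
          split_ifs
          · exact fun h => hpos 0 (Multiset.mem_of_mem_erase h)
          · exact hpos t
        have h1' : ∀ i : ℕ, Even ((Λ' 0).count (2 * i)) := by
          intro i
          have hne : 2 * i ≠ d := by
            obtain ⟨k, hk⟩ := hdo
            omega
          simp only [hΛ'def, if_pos rfl]
          rw [Multiset.count_erase_of_ne hne]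
          exact h1 i
        have h2' : ∀ t : ℕ, 1 ≤ t → 2 * t < r →
            Λ' (t : ZMod r) = Λ' (((r - t : ℕ) : ZMod r)) := by
          intro t h1t h2t
          simp only [hΛ'def]
          rw [if_neg (cast_ne_zero_of_lt h1t (by omega)),
            if_neg (cast_ne_zero_of_lt (t := r - t) (by omega) (by omega))]
          exact h2 t h1t h2t
        have h3' : Even r → ∀ p : ℕ, Even ((Λ' (((r / 2 : ℕ) : ZMod r))).count p) := by
          intro hev p
          obtain ⟨k, hk⟩ := hev
          simp only [hΛ'def]
          rw [if_neg (cast_ne_zero_of_lt (t := r / 2) (by omega) (by omega))]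
          exact h3 ⟨k, hk⟩ p
        have hrlz' := ih (N - d) (by omega) Λ' (by omega) hpos' h1' h2' h3'
        rw [hsplit]
        exact rlz_add hrlz' (rlz_odd d hdo)
      · -- even part of Λ 0
        have heven : Even d := Nat.not_odd_iff_even.mp hdo
        have hcnt : Even ((Λ 0).count d) := by
          have h := h1 (d / 2)
          rwa [show 2 * (d / 2) = d from by obtain ⟨k, hk⟩ := heven; omega] at h
        have hge2 : 2 ≤ (Λ 0).count d := by
          have hc1 : 1 ≤ (Λ 0).count d := Multiset.one_le_count_iff_mem.mpr hd0
          obtain ⟨k, hk⟩ := hcnt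
          omega
        have hd1 : d ∈ (Λ 0).erase d := by
          rw [← Multiset.count_pos, Multiset.count_erase_self]
          omega
        set Λ' : ZMod r → Multiset ℕ :=
          fun t => if t = 0 then ((Λ 0).erase d).erase d else Λ t with hΛ'def
        have hsplit : Λ = fun t => Λ' t + ((if t = (0 : ZMod r) then ({d} : Multiset ℕ) else 0)
            + (if t = -(0 : ZMod r) then ({d} : Multiset ℕ) else 0)) := by
          funext t
          by_cases ht : t = 0
          · subst ht
            rw [hΛ'def]
            beta_reduce
            rw [if_pos rfl, if_pos rfl, if_pos neg_zero.symm, erase_erase_add hd0 hd1]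
          · have ht' : t ≠ -(0 : ZMod r) := by rwa [neg_zero]
            simp [hΛ'def, ht, ht']
        have hsz := sizes_split hsplit
        rw [hN, pair_sizes d 0] at hsz
        have hpos' : ∀ t, 0 ∉ Λ' t := by
          intro t
          simp only [hΛ'def]
          split_ifs
          · exact fun h => hpos 0 (Multiset.mem_of_mem_erase (Multiset.mem_of_mem_erase h))
          · exact hpos t
        have h1' : ∀ i : ℕ, Even ((Λ' 0).count (2 * i)) := by
          intro i
          simp only [hΛ'def, if_pos rfl]
          by_cases hie : 2 * i = d
          · rw [hie, Multiset.count_erase_self, Multiset.count_erase_self]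
            obtain ⟨k, hk⟩ := hcnt
            exact ⟨k - 1, by omega⟩
          · rw [Multiset.count_erase_of_ne hie, Multiset.count_erase_of_ne hie]
            exact h1 i
        have h2' : ∀ t : ℕ, 1 ≤ t → 2 * t < r →
            Λ' (t : ZMod r) = Λ' (((r - t : ℕ) : ZMod r)) := by
          intro t h1t h2t
          simp only [hΛ'def]
          rw [if_neg (cast_ne_zero_of_lt h1t (by omega)),
            if_neg (cast_ne_zero_of_lt (t := r - t) (by omega) (by omega))]
          exact h2 t h1t h2t
        have h3' : Even r → ∀ p : ℕ, Even ((Λ' (((r / 2 : ℕ) : ZMod r))).count p) := by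
          intro hev p
          obtain ⟨k, hk⟩ := hev
          simp only [hΛ'def]
          rw [if_neg (cast_ne_zero_of_lt (t := r / 2) (by omega) (by omega))]
          exact h3 ⟨k, hk⟩ p
        have hrlz' := ih (N - (d + d)) (by omega) Λ' (by omega) hpos' h1' h2' h3'
        rw [hsplit]
        exact rlz_add hrlz' (rlz_pair d hdpos 0)
    · -- t₀ ≠ 0
      have hv1 : 1 ≤ t₀.val := by
        rcases Nat.eq_zero_or_pos t₀.val with h0 | h
        · exfalso; apply hB; rw [← hvc, h0, Nat.cast_zero]
        · exact h
      by_cases hself : t₀ = -t₀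
      · -- the self-negative color r/2
        have ht₀t₀ : t₀ + t₀ = 0 := by linear_combination hself
        have hvv : t₀.val + t₀.val = r := by
          have hc0 : ((t₀.val + t₀.val : ℕ) : ZMod r) = 0 := by
            rw [Nat.cast_add, hvc]; exact ht₀t₀
          rw [ZMod.natCast_eq_zero_iff] at hc0
          obtain ⟨k, hk⟩ := hc0
          have hk2 : k < 2 := by
            by_contra hge
            push_neg at hge
            have : r * 2 ≤ r * k := Nat.mul_le_mul_left _ hge
            omega
          interval_cases k <;> omega
        have hevenr : Even r := ⟨t₀.val, hvv.symm⟩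
        have hr2 : r / 2 = t₀.val := by omega
        have hcnt : Even ((Λ t₀).count d) := by
          have := h3 hevenr d
          rwa [hr2, hvc] at this
        have hge2 : 2 ≤ (Λ t₀).count d := by
          have hc1 : 1 ≤ (Λ t₀).count d := Multiset.one_le_count_iff_mem.mpr hd
          obtain ⟨k, hk⟩ := hcnt
          omega
        have hd1 : d ∈ (Λ t₀).erase d := by
          rw [← Multiset.count_pos, Multiset.count_erase_self]
          omega
        set Λ' : ZMod r → Multiset ℕ :=
          fun t => if t = t₀ then ((Λ t₀).erase d).erase d else Λ t with hΛ'def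
        have hsplit : Λ = fun t => Λ' t + ((if t = t₀ then ({d} : Multiset ℕ) else 0)
            + (if t = -t₀ then ({d} : Multiset ℕ) else 0)) := by
          funext t
          by_cases ht : t = t₀
          · subst ht
            rw [hΛ'def]
            beta_reduce
            rw [if_pos rfl, if_pos rfl, if_pos hself, erase_erase_add hd hd1]
          · have ht' : t ≠ -t₀ := by rw [← hself]; exact ht
            simp [hΛ'def, ht, ht']
        have hsz := sizes_split hsplit
        rw [hN, pair_sizes d t₀] at hsz
        have hpos' : ∀ t, 0 ∉ Λ' t := by
          intro t
          simp only [hΛ'def]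
          split_ifs
          · exact fun h => hpos t₀ (Multiset.mem_of_mem_erase (Multiset.mem_of_mem_erase h))
          · exact hpos t
        have h1' : ∀ i : ℕ, Even ((Λ' 0).count (2 * i)) := by
          intro i
          simp only [hΛ'def]
          rw [if_neg (fun h => hB h.symm)]
          exact h1 i
        have h2' : ∀ t : ℕ, 1 ≤ t → 2 * t < r →
            Λ' (t : ZMod r) = Λ' (((r - t : ℕ) : ZMod r)) := by
          intro t h1t h2t
          have hne1 : ((t : ℕ) : ZMod r) ≠ t₀ := by
            intro h
            have := (cast_eq_iff_of_lt (r := r) (by omega) hvr).mp (h.trans hvc.symm)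
            omega
          have hne2 : ((r - t : ℕ) : ZMod r) ≠ t₀ := by
            intro h
            have := (cast_eq_iff_of_lt (r := r) (by omega) hvr).mp (h.trans hvc.symm)
            omega
          simp only [hΛ'def]
          rw [if_neg hne1, if_neg hne2]
          exact h2 t h1t h2t
        have h3' : Even r → ∀ p : ℕ, Even ((Λ' (((r / 2 : ℕ) : ZMod r))).count p) := by
          intro _ p
          simp only [hΛ'def]
          rw [hr2, hvc, if_pos rfl]
          by_cases hpd : p = d
          · subst hpd
            rw [Multiset.count_erase_self, Multiset.count_erase_self]
            obtain ⟨k, hk⟩ := hcnt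
            exact ⟨k - 1, by omega⟩
          · rw [Multiset.count_erase_of_ne hpd, Multiset.count_erase_of_ne hpd]
            have := h3 hevenr p
            rwa [hr2, hvc] at this
        have hrlz' := ih (N - (d + d)) (by omega) Λ' (by omega) hpos' h1' h2' h3'
        rw [hsplit]
        exact rlz_add hrlz' (rlz_pair d hdpos t₀)
      · -- generic pair of colors
        have hvvne : t₀.val + t₀.val ≠ r := by
          intro h
          apply hself
          have hc0 : ((t₀.val + t₀.val : ℕ) : ZMod r) = 0 := by
            rw [h, ZMod.natCast_self]
          rw [Nat.cast_add, hvc] at hc0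
          linear_combination hc0
        set u := min t₀.val (r - t₀.val) with hu
        have hu1 : 1 ≤ u := by omega
        have hu2 : 2 * u < r := by omega
        have hnegc : -((u : ℕ) : ZMod r) = ((r - u : ℕ) : ZMod r) := by
          rw [Nat.cast_sub (by omega), ZMod.natCast_self, zero_sub]
        set c := ((u : ℕ) : ZMod r) with hc
        have hcu : c = t₀ ∨ c = -t₀ := by
          rcases Nat.le_total t₀.val (r - t₀.val) with h | h
          · left
            rw [hc, hu, min_eq_left h, hvc]
          · right
            rw [hc, hu, min_eq_right h]
            rw [show r - t₀.val = r - t₀.val from rfl]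
            rw [Nat.cast_sub (by omega), ZMod.natCast_self, zero_sub, hvc]
        have hΛsym : Λ c = Λ (-c) := by
          have := h2 u hu1 hu2
          rw [← hnegc] at this
          exact this
        have hcnec : c ≠ -c := by
          rcases hcu with h | h
          · rw [h]; exact hself
          · rw [h, neg_neg]
            intro hcc
            exact hself hcc.symm
        have hdc1 : d ∈ Λ c := by
          rcases hcu with h | h
          · rw [h]; exact hd
          · rw [hΛsym, h, neg_neg]; exact hd
        have hdc2 : d ∈ Λ (-c) := by rw [← hΛsym]; exact hdc1
        set Λ' : ZMod r → Multiset ℕ :=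
          fun t => if t = c then (Λ c).erase d
            else if t = -c then (Λ (-c)).erase d else Λ t with hΛ'def
        have hsplit : Λ = fun t => Λ' t + ((if t = c then ({d} : Multiset ℕ) else 0)
            + (if t = -c then ({d} : Multiset ℕ) else 0)) := by
          funext t
          by_cases ht : t = c
          · subst ht
            rw [hΛ'def]
            beta_reduce
            rw [if_pos rfl, if_pos rfl, if_neg hcnec, add_zero, erase_add_singleton hdc1]
          · by_cases ht2 : t = -c
            · subst ht2
              rw [hΛ'def]
              beta_reduce
              rw [if_neg (fun h : -c = c => hcnec h.symm), if_pos rfl, if_pos rfl,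
                if_neg (fun h : -c = c => hcnec h.symm), zero_add, erase_add_singleton hdc2]
            · simp [hΛ'def, ht, ht2]
        have hsz := sizes_split hsplit
        rw [hN, pair_sizes d c] at hsz
        have hpos' : ∀ t, 0 ∉ Λ' t := by
          intro t
          simp only [hΛ'def]
          split_ifs
          · exact fun h => hpos c (Multiset.mem_of_mem_erase h)
          · exact fun h => hpos (-c) (Multiset.mem_of_mem_erase h)
          · exact hpos t
        have hczero : (0 : ZMod r) ≠ c := fun h => cast_ne_zero_of_lt hu1 (by omega) h.symm
        have hcneg0 : (0 : ZMod r) ≠ -c := by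
          rw [hnegc]
          exact fun h => cast_ne_zero_of_lt (t := r - u) (by omega) (by omega) h.symm
        have h1' : ∀ i : ℕ, Even ((Λ' 0).count (2 * i)) := by
          intro i
          simp only [hΛ'def]
          rw [if_neg hczero, if_neg hcneg0]
          exact h1 i
        have h2' : ∀ t : ℕ, 1 ≤ t → 2 * t < r →
            Λ' (t : ZMod r) = Λ' (((r - t : ℕ) : ZMod r)) := by
          intro t h1t h2t
          by_cases hct : ((t : ℕ) : ZMod r) = c
          · have htu : t = u := (cast_eq_iff_of_lt (by omega) (by omega)).mp hct
            have hrtu : ((r - t : ℕ) : ZMod r) = -c := by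
              rw [htu, ← hnegc]
            simp only [hΛ'def]
            rw [if_pos hct, if_pos hrtu, if_neg (by rw [hrtu]; exact fun h => hcnec h.symm)]
            rw [hΛsym]
          · have hctn : ((t : ℕ) : ZMod r) ≠ -c := by
              rw [hnegc]
              intro h
              have := (cast_eq_iff_of_lt (r := r) (by omega) (by omega)).mp h
              omega
            have hrt1 : ((r - t : ℕ) : ZMod r) ≠ c := by
              intro h
              have := (cast_eq_iff_of_lt (r := r) (by omega) (by omega)).mp h
              omega
            have hrt2 : ((r - t : ℕ) : ZMod r) ≠ -c := by
              rw [hnegc]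
              intro h
              have := (cast_eq_iff_of_lt (r := r) (by omega) (by omega)).mp h
              have : t = u := by omega
              exact hct (by rw [this])
            simp only [hΛ'def]
            rw [if_neg hct, if_neg hctn, if_neg hrt1, if_neg hrt2]
            exact h2 t h1t h2t
        have h3' : Even r → ∀ p : ℕ, Even ((Λ' (((r / 2 : ℕ) : ZMod r))).count p) := by
          intro hev p
          obtain ⟨k, hk⟩ := hev
          have hrh1 : ((r/2 : ℕ) : ZMod r) ≠ c := by
            intro h
            have := (cast_eq_iff_of_lt (r := r) (by omega) (by omega)).mp h
            omega
          have hrh2 : ((r/2 : ℕ) : ZMod r) ≠ -c := by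
            rw [hnegc]
            intro h
            have := (cast_eq_iff_of_lt (r := r) (by omega) (by omega)).mp h
            omega
          simp only [hΛ'def]
          rw [if_neg hrh1, if_neg hrh2]
          exact h3 ⟨k, hk⟩ p
        have hrlz' := ih (N - (d + d)) (by omega) Λ' (by omega) hpos' h1' h2' h3'
        rw [hsplit]
        exact rlz_add hrlz' (rlz_pair d hdpos c)

end Induction

end GrnAux



namespace GrnAux

lemma backward_direction {r n : ℕ} [NeZero r] {Λ : ZMod r → Multiset ℕ}
    (hsize : ∑ t ∈ Finset.range r, (Λ (t : ZMod r)).sum = n)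
    (hrlz : Rlz r Λ) :
    ∃ π : Equiv.Perm (Fin n × ZMod r), π ∈ genSym r n ∧
      IsGrnCycleType r n (π * barPerm r n π) Λ := by
  obtain ⟨α, fty, s, z, hbij, habs, hcard⟩ := hrlz
  have hcard' : Fintype.card α = n := by rw [← Nat.card_eq_fintype_card, hcard, hsize]
  let e : α ≃ Fin n := Fintype.equivFinOfCardEq hcard'
  let s' : Fin n → Fin n := fun i => e (s (e.symm i))
  let z' : Fin n → ZMod r := fun i => z (e.symm i)
  have hc : ∀ x : α, s' (e x) = e (s x) := fun x => by simp [s']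
  have hz : ∀ x : α, z' (e x) = z x := fun x => by simp [z']
  have habs' : AbsCount s' z' Λ := absCount_comp e hc hz habs
  have hbij' : Function.Bijective s' := (e.bijective.comp hbij).comp e.symm.bijective
  let σ : Equiv.Perm (Fin n) := Equiv.ofBijective s' hbij'
  refine ⟨mkPerm σ z', mkPerm_mem σ z', ?_⟩
  rw [isGrnCycleType_iff_absCount (mkPerm_mem σ z') Λ, uf_mkPerm, zf_mkPerm]
  exact habs'

end GrnAux


/-- An `r`-tuple of partitions `Λ` of total size `n` is the cycle type of an
absolute square `π·π̄` in `G(r,1,n)` iff (1) every even part of `Λ 0` has even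
multiplicity, (2) `Λ t = Λ (r−t)` for `1 ≤ t < r/2`, and (3) if `r` is even,
every part of `Λ (r/2)` has even multiplicity. -/
theorem grn_absolute_square_cycleType_iff (r n : ℕ) (hr : 0 < r)
    (Λ : ZMod r → Multiset ℕ) (hpos : ∀ t, 0 ∉ Λ t)
    (hsize : ∑ t ∈ Finset.range r, (Λ (t : ZMod r)).sum = n) :
    (∃ π : Equiv.Perm (Fin n × ZMod r), π ∈ genSym r n ∧
        IsGrnCycleType r n (π * barPerm r n π) Λ) ↔
      ((∀ i : ℕ, Even ((Λ 0).count (2 * i))) ∧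
       (∀ t : ℕ, 1 ≤ t → 2 * t < r → Λ (t : ZMod r) = Λ (((r - t : ℕ) : ZMod r))) ∧
       (Even r → ∀ p : ℕ, Even ((Λ (((r / 2 : ℕ) : ZMod r))).count p))) := by
  haveI : NeZero r := ⟨hr.ne'⟩
  constructor
  · intro hex
    exact GrnAux.forward_direction hex hpos
  · rintro ⟨h1, h2, h3⟩
    exact GrnAux.backward_direction hsize
      (GrnAux.rlz_of_conditions _ Λ rfl hpos h1 h2 h3)
end

section
/- Let r, q, n be positive integers with q dividing r and gcd(q,n) ≤ 2, and let G = G(r,q,n) be the corresponding complex reflection group. Assuming the Bump–Ginzburg–Caselli identity Σ_{χ∈Irr(G)} χ(g) = |{π ∈ G : π·π̄ = g}| for all g ∈ G, the character table sum of G is at least the character degree sum, with equality if and only if G is abelian. -/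
open CategoryTheory
open scoped ComplexOrder

/-!
By the Bump–Ginzburg–Caselli identity the column sum of the character table at `g` counts the
absolute square roots of `g`, so the table sum exceeds the degree sum by the number of absolute
square roots of nonidentity class representatives: a natural number, zero iff `π π̄ = 1` for all
`π`. As the bar operation is an automorphism, `π π̄ = 1` for all `π` makes inversion a
homomorphism, so the group is abelian. Conversely, an abelian `G(r,q,n)` contains the uncolored
copy of `S_n`, so `n ≤ 2`; commuting with the uncolored transpositions forces all colors of `π`
to agree, and then `π π̄ = 1`.
-/

open Finset

section CharacterSums

variable {G : Type} [Group G]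

theorem ConjClasses.mk_out (C : ConjClasses G) : ConjClasses.mk (Quotient.out C) = C := by
  rw [← ConjClasses.quotient_mk_eq_mk]
  exact Quotient.out_eq C

theorem ConjClasses.out_one : Quotient.out (1 : ConjClasses G) = 1 := by
  rw [← isConj_one_left, ← ConjClasses.mk_eq_mk_iff_isConj, ← ConjClasses.one_eq_mk_one,
    ConjClasses.mk_out]

theorem ConjClasses.isConj_out_mk (g : G) : IsConj (Quotient.out (ConjClasses.mk g)) g :=
  ConjClasses.mk_eq_mk_iff_isConj.mp (ConjClasses.mk_out _)

theorem IsIrrFamily.apply_eq_of_isConj {S : Finset (G → ℂ)} (hS : IsIrrFamily G S)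
    {f : G → ℂ} (hf : f ∈ S) {a b : G} (hab : IsConj a b) : f a = f b := by
  obtain ⟨V, -, rfl⟩ := hS.1 f hf
  obtain ⟨c, rfl⟩ := isConj_iff.mp hab
  exact (FDRep.char_conj V a c).symm

variable {S : Finset (G → ℂ)} {N : G → ℕ}

theorem tableSum_eq_degreeSum_add [Fintype (ConjClasses G)] [DecidableEq (ConjClasses G)]
    (hN : ∀ g, ∑ f ∈ S, f g = N g) :
    tableSum G S = degreeSum G S +
      ((∑ C ∈ univ.erase (1 : ConjClasses G), N (Quotient.out C) : ℕ) : ℂ) := by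
  simp only [tableSum, degreeSum, finsum_eq_sum_of_fintype]
  rw [sum_comm, hN, ← ConjClasses.out_one (G := G), ← Nat.cast_add,
    add_sum_erase univ (fun C : ConjClasses G => N (Quotient.out C)) (mem_univ 1),
    Nat.cast_sum]
  exact sum_congr rfl fun C _ => hN _

theorem degreeSum_le_tableSum [Finite G] (hN : ∀ g, ∑ f ∈ S, f g = N g) :
    degreeSum G S ≤ tableSum G S := by
  classical
  have := Fintype.ofFinite (ConjClasses G)
  rw [tableSum_eq_degreeSum_add hN]
  exact le_add_of_nonneg_right (Nat.cast_nonneg _)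

theorem tableSum_eq_degreeSum_iff [Finite G] (hS : IsIrrFamily G S)
    (hN : ∀ g, ∑ f ∈ S, f g = N g) :
    tableSum G S = degreeSum G S ↔ ∀ g, N g ≠ 0 → g = 1 := by
  classical
  have := Fintype.ofFinite (ConjClasses G)
  have hNconj : ∀ a b, IsConj a b → N a = N b := fun a b hab => by
    exact_mod_cast (hN a).symm.trans
      ((sum_congr rfl fun f hf => hS.apply_eq_of_isConj hf hab).trans (hN b))
  rw [tableSum_eq_degreeSum_add hN, add_eq_left, Nat.cast_eq_zero, sum_eq_zero_iff]
  constructor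
  · intro h g hg
    by_contra hne
    refine hg ((hNconj _ _ (ConjClasses.isConj_out_mk g)).symm.trans
      (h _ (mem_erase.mpr ⟨?_, mem_univ _⟩)))
    rwa [Ne, ConjClasses.one_eq_mk_one, ConjClasses.mk_eq_mk_iff_isConj, isConj_one_left]
  · intro h C hC
    by_contra h0
    refine (mem_erase.mp hC).1 ?_
    rw [← ConjClasses.mk_out C, h _ h0, ← ConjClasses.one_eq_mk_one]

end CharacterSums

theorem Subgroup.mul_comm_of_forall_mul_map_eq_one {G : Type*} [Group G] {H : Subgroup G}
    (φ : G →* G) (h : ∀ x ∈ H, x * φ x = 1) {a b : G} (ha : a ∈ H) (hb : b ∈ H) :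
    a * b = b * a := by
  have hinv : ∀ x ∈ H, φ x = x⁻¹ := fun x hx => eq_inv_of_mul_eq_one_right (h x hx)
  have hab := hinv _ (H.mul_mem ha hb)
  rw [map_mul, hinv a ha, hinv b hb, mul_inv_rev] at hab
  simpa using congrArg (·⁻¹) hab.symm

theorem Fin.involutive_of_surjective_of_le_two {n : ℕ} (hn : n ≤ 2) {f : Fin n → Fin n}
    (hf : Function.Surjective f) : Function.Involutive f := by
  have key : ∀ g : Fin n → Fin n, Function.Surjective g → ∀ i, g (g i) = i := by
    interval_cases n <;> decide
  exact key f hf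

section GeneralizedSymmetric

variable {r n : ℕ} {π : Equiv.Perm (Fin n × ZMod r)}

theorem shiftPerm_apply (x : Fin n × ZMod r) : shiftPerm r n x = (x.1, 1 + x.2) := rfl

theorem shiftPerm_pow_apply (m : ℕ) (x : Fin n × ZMod r) :
    (shiftPerm r n ^ m) x = (x.1, m + x.2) := by
  induction m with
  | zero => simp
  | succ m ih =>
    rw [pow_succ', Equiv.Perm.mul_apply, ih, shiftPerm_apply]
    push_cast
    ring_nf

theorem etaPerm_apply (x : Fin n × ZMod r) : etaPerm r n x = (x.1, -x.2) := rfl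

theorem etaPerm_inv : (etaPerm r n)⁻¹ = etaPerm r n := by
  ext x <;> simp [etaPerm]

theorem barPerm_eq_conj (π : Equiv.Perm (Fin n × ZMod r)) :
    barPerm r n π = MulAut.conj (etaPerm r n) π := by
  rw [MulAut.conj_apply, etaPerm_inv, barPerm]

theorem barPerm_apply_zero (π : Equiv.Perm (Fin n × ZMod r)) (i : Fin n) :
    barPerm r n π (i, 0) = ((π (i, 0)).1, -(π (i, 0)).2) := by
  simp [barPerm, etaPerm_apply]

theorem apply_of_mem_genSym [NeZero r] (hπ : π ∈ genSym r n) (i : Fin n) (k : ZMod r) :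
    π (i, k) = ((π (i, 0)).1, (π (i, 0)).2 + k) := by
  have hc : Commute π (shiftPerm r n) := Subgroup.mem_centralizer_singleton_iff.mp hπ
  replace hc := hc.pow_right k.val
  simpa [shiftPerm_pow_apply, add_comm] using DFunLike.congr_fun hc.eq (i, 0)

theorem barPerm_apply_of_mem_genSym [NeZero r] (hπ : π ∈ genSym r n) (i : Fin n)
    (k : ZMod r) :
    barPerm r n π (i, k) = ((π (i, 0)).1, k - (π (i, 0)).2) := by
  simp only [barPerm, Equiv.Perm.mul_apply, etaPerm_apply, apply_of_mem_genSym hπ i (-k)]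
  simp only [neg_add, neg_neg, sub_eq_add_neg, add_comm]

theorem barPerm_mem_genSym [NeZero r] (hπ : π ∈ genSym r n) :
    barPerm r n π ∈ genSym r n := by
  refine Subgroup.mem_centralizer_singleton_iff.mpr (Equiv.ext fun ⟨i, k⟩ => ?_)
  simp only [Equiv.Perm.mul_apply, shiftPerm_apply, barPerm_apply_of_mem_genSym hπ]
  ring_nf

/-- The embedding `σ ↦ (0; σ)` of `S_n` into `G(r,1,n)`. -/
def liftPerm (r n : ℕ) : Equiv.Perm (Fin n) →* Equiv.Perm (Fin n × ZMod r) where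
  toFun σ := Equiv.prodCongr σ (Equiv.refl _)
  map_one' := rfl
  map_mul' _ _ := rfl

theorem liftPerm_apply (σ : Equiv.Perm (Fin n)) (x : Fin n × ZMod r) :
    liftPerm r n σ x = (σ x.1, x.2) := rfl

theorem liftPerm_injective : Function.Injective (liftPerm r n) := fun _ _ h =>
  Equiv.ext fun i => congrArg Prod.fst (DFunLike.congr_fun h (i, 0))

theorem liftPerm_mem_genSym (σ : Equiv.Perm (Fin n)) : liftPerm r n σ ∈ genSym r n :=
  Subgroup.mem_centralizer_singleton_iff.mpr rfl

theorem snd_apply_eq_of_commute_liftPerm {σ : Equiv.Perm (Fin n)}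
    (h : Commute π (liftPerm r n σ)) (i : Fin n) : (π (σ i, 0)).2 = (π (i, 0)).2 := by
  have hi : π (σ i, 0) = (σ (π (i, 0)).1, (π (i, 0)).2) := DFunLike.congr_fun h.eq (i, 0)
  rw [hi]

theorem mul_barPerm_eq_one_of_le_two [NeZero r] (hn : n ≤ 2) (hπ : π ∈ genSym r n)
    (hcolor : ∀ i j, (π (i, 0)).2 = (π (j, 0)).2) : π * barPerm r n π = 1 := by
  have hsurj : Function.Surjective fun i => (π (i, 0)).1 := fun j => by
    obtain ⟨⟨i, k⟩, hik⟩ := π.surjective (j, 0)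
    exact ⟨i, congrArg Prod.fst ((apply_of_mem_genSym hπ i k).symm.trans hik)⟩
  have hinv : ∀ i, (π ((π (i, 0)).1, 0)).1 = i :=
    Fin.involutive_of_surjective_of_le_two hn hsurj
  ext ⟨i, k⟩ : 1
  rw [Equiv.Perm.mul_apply, barPerm_apply_of_mem_genSym hπ, apply_of_mem_genSym hπ, hinv,
    hcolor _ i, add_sub_cancel, Equiv.Perm.one_apply]

theorem forall_mul_barPerm_eq_one_iff [NeZero r] {H : Subgroup (Equiv.Perm (Fin n × ZMod r))}
    (hH : H ≤ genSym r n) (hlift : (liftPerm r n).range ≤ H) :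
    (∀ π ∈ H, π * barPerm r n π = 1) ↔ ∀ a b : H, a * b = b * a := by
  constructor
  · intro h a b
    refine Subtype.ext (Subgroup.mul_comm_of_forall_mul_map_eq_one
      (MulAut.conj (etaPerm r n)).toMonoidHom (fun x hx => ?_) a.2 b.2)
    simpa only [MulEquiv.coe_toMonoidHom, ← barPerm_eq_conj] using h x hx
  · intro hcomm π hπ
    have hmem (σ : Equiv.Perm (Fin n)) : liftPerm r n σ ∈ H := hlift ⟨σ, rfl⟩
    have hcommute (σ : Equiv.Perm (Fin n)) : Commute π (liftPerm r n σ) :=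
      congrArg Subtype.val (hcomm ⟨π, hπ⟩ ⟨_, hmem σ⟩)
    have hn : n ≤ 2 := by
      refine Nat.card_fin n ▸
        Equiv.Perm.isMulCommutative_iff_card_le_two.mp ⟨⟨fun σ τ => ?_⟩⟩
      refine liftPerm_injective (r := r) ?_
      rw [map_mul, map_mul]
      exact congrArg Subtype.val (hcomm ⟨_, hmem σ⟩ ⟨_, hmem τ⟩)
    refine mul_barPerm_eq_one_of_le_two hn (hH hπ) fun i j => ?_
    simpa using snd_apply_eq_of_commute_liftPerm (hcommute (Equiv.swap j i)) j

end GeneralizedSymmetric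

theorem grqn_tableSum_ge_degreeSum_general (r q n : ℕ) (hr : 0 < r)
    (hdvd : q ∣ r)
    (H : Subgroup (Equiv.Perm (Fin n × ZMod r)))
    (hH : ∀ P : Equiv.Perm (Fin n × ZMod r), P ∈ H ↔
      (P ∈ genSym r n ∧
        ZMod.castHom hdvd (ZMod q) (∑ i : Fin n, (P (i, (0 : ZMod r))).2) = 0))
    (S : Finset (H → ℂ)) (hS : IsIrrFamily H S)
    (hCaselli : ∀ g : H, (∑ f ∈ S, f g) =
      (Nat.card {π : Equiv.Perm (Fin n × ZMod r) //
        π ∈ H ∧ π * barPerm r n π = (g : Equiv.Perm (Fin n × ZMod r))} : ℂ)) :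
    degreeSum H S ≤ tableSum H S ∧
    (tableSum H S = degreeSum H S ↔ ∀ a b : H, a * b = b * a) := by
  classical
  have : NeZero r := ⟨hr.ne'⟩
  have hHle : H ≤ genSym r n := fun P hP => ((hH P).mp hP).1
  have hlift : (liftPerm r n).range ≤ H := by
    rintro _ ⟨σ, rfl⟩
    exact (hH _).mpr ⟨liftPerm_mem_genSym σ, by simp [liftPerm_apply]⟩
  have hbar : ∀ π ∈ H, barPerm r n π ∈ H := fun π hπ => by
    obtain ⟨hgen, hsum⟩ := (hH π).mp hπ
    refine (hH _).mpr ⟨barPerm_mem_genSym hgen, ?_⟩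
    simp only [barPerm_apply_zero, sum_neg_distrib, map_neg, hsum, neg_zero]
  refine ⟨degreeSum_le_tableSum hCaselli, ?_⟩
  rw [tableSum_eq_degreeSum_iff hS hCaselli, ← forall_mul_barPerm_eq_one_iff hHle hlift]
  constructor
  · intro h π hπ
    have hsqrt : Nat.card {σ : Equiv.Perm (Fin n × ZMod r) //
        σ ∈ H ∧ σ * barPerm r n σ = π * barPerm r n π} ≠ 0 :=
      Nat.card_ne_zero.mpr ⟨⟨⟨π, hπ, rfl⟩⟩, inferInstance⟩
    exact congrArg Subtype.val (h ⟨_, H.mul_mem hπ (hbar π hπ)⟩ hsqrt)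
  · intro h g hg
    obtain ⟨⟨π, hπ, hπg⟩⟩ := (Nat.card_ne_zero.mp hg).1
    exact Subtype.ext (hπg ▸ h π hπ)

/-- Let `q ∣ r`, `gcd(q,n) ≤ 2`, and let `H = G(r,q,n)` be the complex
reflection group, the subgroup of `G(r,1,n)` of elements whose total color sum
vanishes mod `q`.  Assuming the Bump–Ginzburg–Caselli identity (the sum of all
irreducible character values at `g` counts absolute square roots of `g`), the
character table sum of `H` is at least the character degree sum, with equality
iff `H` is abelian. -/
theorem grqn_tableSum_ge_degreeSum (r q n : ℕ) (hr : 0 < r) (hq : 0 < q) (hn : 0 < n)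
    (hdvd : q ∣ r) (hgcd : Nat.gcd q n ≤ 2)
    (H : Subgroup (Equiv.Perm (Fin n × ZMod r)))
    (hH : ∀ P : Equiv.Perm (Fin n × ZMod r), P ∈ H ↔
      (P ∈ genSym r n ∧
        ZMod.castHom hdvd (ZMod q) (∑ i : Fin n, (P (i, (0 : ZMod r))).2) = 0))
    (S : Finset (H → ℂ)) (hS : IsIrrFamily H S)
    (hCaselli : ∀ g : H, (∑ f ∈ S, f g) =
      (Nat.card {π : Equiv.Perm (Fin n × ZMod r) //
        π ∈ H ∧ π * barPerm r n π = (g : Equiv.Perm (Fin n × ZMod r))} : ℂ)) :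
    degreeSum H S ≤ tableSum H S ∧
    (tableSum H S = degreeSum H S ↔ ∀ a b : H, a * b = b * a) :=
  grqn_tableSum_ge_degreeSum_general r q n hr hdvd H hH S hS hCaselli
end
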